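/- arXiv:2004.02500 — 7 statements merged into one kernel-verified Lean document; each statement's English description precedes it below -/
import Mathlib

section
/- There is a constant C (depending only on F) such that for all positive integers a and b, ϑ(ab) ≤ C·ϑ(a)ϑ(b), where ϑ(n) counts roots of the fixed cubic F modulo n. -/
/-- The number of roots of `F(x) = x³ + Ax + B` modulo `n`. -/
noncomputable def theta (A B : ℤ) (n : ℕ) : ℕ :=
  Nat.card {ρ : ZMod n // ρ ^ 3 + (A : ZMod n) * ρ + (B : ZMod n) = 0}

/-!
By the Chinese remainder theorem `ϑ` is multiplicative, so it suffices to show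
`ϑ(p^(α+β)) ≤ p^(2d) ϑ(p^α) ϑ(p^β)` with `d = v_p(4A³ + 27B²)`; the product of the `p^(2d)` is at
most `(4A³ + 27B²)²`. The Bezout identity `u F + v F' = 4A³ + 27B²` says that `F` and `F'` have no
common root modulo `p^(d+1)`. By Taylor's formula, two roots of `F` modulo `p^k` that agree modulo
`p^(d+1)` then agree modulo `p^(k-d)`, so for `d < α ≤ k` every root modulo `p^α` has at most `p^d`
lifts to a root modulo `p^k`. When `α, β ≤ d` the trivial bound `ϑ(p^(α+β)) ≤ p^(2d)` suffices.
-/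

open Polynomial

theorem Polynomial.aeval_ringHom_apply (f : ℤ[X]) {R S F : Type*} [Ring R] [Ring S]
    [FunLike F R S] [RingHomClass F R S] (φ : F) (x : R) : aeval (φ x) f = φ (aeval x f) :=
  aeval_algHom_apply (φ : R →+* S).toIntAlgHom x f

theorem Polynomial.aeval_intCast_eq_zero_iff_dvd (f : ℤ[X]) (n : ℕ) (x : ℤ) :
    aeval (x : ZMod n) f = 0 ↔ (n : ℤ) ∣ f.eval x := by
  rw [← ZMod.intCast_zmod_eq_zero_iff_dvd, ← eq_intCast (Int.castRingHom (ZMod n)),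
    aeval_ringHom_apply]
  simp

theorem Int.pow_sub_dvd_of_pow_dvd_mul {p : ℕ} [Fact p.Prime] {a b : ℤ} {k d : ℕ}
    (h : (p : ℤ) ^ k ∣ a * b) (hb : ¬ (p : ℤ) ^ (d + 1) ∣ b) : (p : ℤ) ^ (k - d) ∣ a := by
  rcases eq_or_ne a 0 with rfl | ha
  · exact dvd_zero _
  have hb0 : b ≠ 0 := by
    rintro rfl
    exact hb (dvd_zero _)
  rw [padicValInt_dvd_iff] at h hb ⊢
  rw [padicValInt.mul ha hb0] at h
  have hk := h.resolve_left (mul_ne_zero ha hb0)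
  omega

theorem Polynomial.dvd_of_dvd_eval_of_dvd_eval_derivative {f u v : ℤ[X]} {D : ℤ}
    (hD : u * f + v * derivative f = C D) {m y : ℤ} (hf : m ∣ f.eval y)
    (hf' : m ∣ (derivative f).eval y) : m ∣ D := by
  have hDy := congrArg (eval y) hD
  rw [eval_add, eval_mul, eval_mul, eval_C] at hDy
  exact hDy ▸ dvd_add (dvd_mul_of_dvd_right hf _) (dvd_mul_of_dvd_right hf' _)

theorem Polynomial.pow_sub_dvd_sub_of_dvd_eval {p d k : ℕ} [Fact p.Prime] {f u v : ℤ[X]} {D : ℤ}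
    (hD : u * f + v * derivative f = C D) (hpD : ¬ (p : ℤ) ^ (d + 1) ∣ D) {x y : ℤ}
    (hx : (p : ℤ) ^ k ∣ f.eval x) (hy : (p : ℤ) ^ k ∣ f.eval y)
    (hxy : (p : ℤ) ^ (d + 1) ∣ x - y) : (p : ℤ) ^ (k - d) ∣ x - y := by
  by_cases hk : k ≤ 2 * d + 1
  · exact (pow_dvd_pow _ (by omega)).trans hxy
  obtain ⟨g, hg⟩ := binomExpansion f y (x - y)
  rw [add_sub_cancel] at hg
  have hfactor : f.eval x - f.eval y = (x - y) * ((derivative f).eval y + g * (x - y)) := by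
    rw [hg]
    ring
  -- `p^(d+1)` cannot divide the second factor: it would then divide `f'(y)`, and `f(y)` too.
  refine Int.pow_sub_dvd_of_pow_dvd_mul (hfactor ▸ dvd_sub hx hy) fun hS => hpD ?_
  have hf' : (p : ℤ) ^ (d + 1) ∣ (derivative f).eval y :=
    (dvd_add_left (dvd_mul_of_dvd_right hxy g)).mp hS
  exact dvd_of_dvd_eval_of_dvd_eval_derivative hD ((pow_dvd_pow _ (by omega)).trans hy) hf'

abbrev RootsMod (f : ℤ[X]) (n : ℕ) : Type := {ρ : ZMod n // aeval ρ f = 0}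

namespace RootsMod

variable (f : ℤ[X])

theorem card_one : Nat.card (RootsMod f 1) = 1 :=
  Nat.card_eq_one_iff_unique.mpr ⟨inferInstance, ⟨⟨0, Subsingleton.elim _ _⟩⟩⟩

theorem card_le (n : ℕ) [NeZero n] : Nat.card (RootsMod f n) ≤ n :=
  (Nat.card_le_card_of_injective _ Subtype.val_injective).trans (Nat.card_zmod n).le

theorem card_mul {m n : ℕ} (h : m.Coprime n) :
    Nat.card (RootsMod f (m * n)) = Nat.card (RootsMod f m) * Nat.card (RootsMod f n) := by
  let e := ZMod.chineseRemainder h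
  rw [← Nat.card_prod]
  refine Nat.card_congr ((e.toEquiv.subtypeEquiv fun ρ => ?_).trans Equiv.subtypeProdEquivProd)
  rw [← map_eq_zero_iff e e.injective, ← aeval_ringHom_apply]
  erw [aeval_prod_apply]
  exact Prod.ext_iff

variable {f}

def reduce {m n : ℕ} (h : m ∣ n) (ρ : RootsMod f n) : RootsMod f m :=
  ⟨ZMod.castHom h (ZMod m) ρ, by rw [aeval_ringHom_apply, ρ.2, map_zero]⟩

theorem card_eq_zero_of_dvd {m n : ℕ} [NeZero n] (h : m ∣ n)
    (h0 : Nat.card (RootsMod f m) = 0) : Nat.card (RootsMod f n) = 0 := by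
  have : NeZero m := ⟨fun hm => NeZero.ne n (Nat.eq_zero_of_zero_dvd (hm ▸ h))⟩
  rw [Finite.card_eq_zero_iff] at h0 ⊢
  exact (reduce h).isEmpty

theorem dvd_eval_val {n : ℕ} [NeZero n] (ρ : RootsMod f n) : (n : ℤ) ∣ f.eval (ρ.1.val : ℤ) := by
  rw [← aeval_intCast_eq_zero_iff_dvd]
  simpa using ρ.2

theorem card_pow_le_mul_card_pow {p d α k : ℕ} [Fact p.Prime] {u v : ℤ[X]} {D : ℤ}
    (hD : u * f + v * derivative f = C D) (hpD : ¬ (p : ℤ) ^ (d + 1) ∣ D)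
    (hα : d + 1 ≤ α) (hk : α ≤ k) :
    Nat.card (RootsMod f (p ^ k)) ≤ p ^ d * Nat.card (RootsMod f (p ^ α)) := by
  have hpow : p ^ k = p ^ d * p ^ (k - d) := by
    rw [← pow_add]
    congr 1
    omega
  -- A root modulo `p^k` is fixed by its class modulo `p^(k-d)`, hence by its reduction modulo
  -- `p^α`, together with its leading digit in base `p^(k-d)`.
  let digit (ρ : RootsMod f (p ^ k)) : Fin (p ^ d) :=
    ⟨ρ.1.val / p ^ (k - d), Nat.div_lt_of_lt_mul (by rw [mul_comm, ← hpow]; exact ρ.1.val_lt)⟩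
  have hinj : Function.Injective fun ρ => (digit ρ, reduce (pow_dvd_pow p hk) ρ) := by
    rintro σ τ hστ
    simp only [Prod.mk.injEq, Fin.mk.injEq, digit, reduce, Subtype.mk.injEq,
      ZMod.castHom_apply] at hστ
    obtain ⟨hdigit, hred⟩ := hστ
    rw [← ZMod.natCast_val, ← ZMod.natCast_val, ZMod.natCast_eq_natCast_iff,
      Nat.modEq_iff_dvd] at hred
    have hmod : σ.1.val ≡ τ.1.val [MOD p ^ (k - d)] := by
      rw [Nat.modEq_iff_dvd]
      push_cast at hred ⊢
      exact pow_sub_dvd_sub_of_dvd_eval hD hpD (by exact_mod_cast dvd_eval_val τ)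
        (by exact_mod_cast dvd_eval_val σ) ((pow_dvd_pow _ hα).trans hred)
    refine Subtype.ext (ZMod.val_injective _ ?_)
    rw [← Nat.div_add_mod σ.1.val (p ^ (k - d)), ← Nat.div_add_mod τ.1.val (p ^ (k - d)), hdigit,
      hmod]
  calc Nat.card (RootsMod f (p ^ k)) ≤ Nat.card (Fin (p ^ d) × RootsMod f (p ^ α)) :=
        Nat.card_le_card_of_injective _ hinj
    _ = p ^ d * Nat.card (RootsMod f (p ^ α)) := by rw [Nat.card_prod, Nat.card_fin]

theorem card_pow_add_le {p : ℕ} [Fact p.Prime] {u v : ℤ[X]} {D : ℤ}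
    (hD : u * f + v * derivative f = C D) (hD0 : D ≠ 0) (α β : ℕ) :
    Nat.card (RootsMod f (p ^ (α + β))) ≤
      p ^ (2 * padicValInt p D) *
        (Nat.card (RootsMod f (p ^ α)) * Nat.card (RootsMod f (p ^ β))) := by
  wlog hβα : β ≤ α generalizing α β
  · rw [add_comm, mul_comm (Nat.card _)]
    exact this β α (by omega)
  set d := padicValInt p D
  have hpD : ¬ (p : ℤ) ^ (d + 1) ∣ D := by
    rw [padicValInt_dvd_iff]
    omega
  rcases Nat.eq_zero_or_pos (Nat.card (RootsMod f (p ^ α))) with hα0 | hα0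
  · rw [card_eq_zero_of_dvd (pow_dvd_pow p (Nat.le_add_right α β)) hα0]
    exact Nat.zero_le _
  rcases Nat.eq_zero_or_pos (Nat.card (RootsMod f (p ^ β))) with hβ0 | hβ0
  · rw [card_eq_zero_of_dvd (pow_dvd_pow p (Nat.le_add_left β α)) hβ0]
    exact Nat.zero_le _
  have hp := (Fact.out : p.Prime).one_lt
  by_cases hα : d + 1 ≤ α
  · calc Nat.card (RootsMod f (p ^ (α + β))) ≤ p ^ d * Nat.card (RootsMod f (p ^ α)) :=
          card_pow_le_mul_card_pow hD hpD hα (Nat.le_add_right α β)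
      _ ≤ p ^ (2 * d) * (Nat.card (RootsMod f (p ^ α)) * Nat.card (RootsMod f (p ^ β))) :=
          Nat.mul_le_mul (Nat.pow_le_pow_right hp.le (by omega)) (Nat.le_mul_of_pos_right _ hβ0)
  · calc Nat.card (RootsMod f (p ^ (α + β))) ≤ p ^ (α + β) := card_le f _
      _ ≤ p ^ (2 * d) := Nat.pow_le_pow_right hp.le (by omega)
      _ ≤ p ^ (2 * d) * (Nat.card (RootsMod f (p ^ α)) * Nat.card (RootsMod f (p ^ β))) :=
          Nat.le_mul_of_pos_right _ (Nat.mul_pos hα0 hβ0)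

end RootsMod

theorem Nat.le_prod_primeFactors_mul_of_multiplicative {g c : ℕ → ℕ}
    (h_mult : ∀ m n, m.Coprime n → g (m * n) = g m * g n) (h_one : g 1 = 1)
    (h_pow : ∀ p α β, p.Prime → g (p ^ (α + β)) ≤ c p * (g (p ^ α) * g (p ^ β)))
    {a b : ℕ} (ha : a ≠ 0) (hb : b ≠ 0) :
    g (a * b) ≤ (∏ p ∈ (a * b).primeFactors, c p) * (g a * g b) := by
  set S := (a * b).primeFactors
  have hexpand {n : ℕ} (hn : n ≠ 0) (hS : n.primeFactors ⊆ S) :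
      g n = ∏ p ∈ S, g (p ^ n.factorization p) := by
    rw [Nat.multiplicative_factorization g h_mult h_one hn]
    exact Finsupp.prod_of_support_subset _ (by rwa [Nat.support_factorization]) _
      fun p _ => by rw [pow_zero, h_one]
  have hSa : a.primeFactors ⊆ S := Nat.primeFactors_mono (dvd_mul_right a b) (mul_ne_zero ha hb)
  have hSb : b.primeFactors ⊆ S := Nat.primeFactors_mono (dvd_mul_left b a) (mul_ne_zero ha hb)
  rw [hexpand (mul_ne_zero ha hb) subset_rfl, hexpand ha hSa, hexpand hb hSb,
    ← Finset.prod_mul_distrib, ← Finset.prod_mul_distrib]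
  refine Finset.prod_le_prod' fun p hp => ?_
  rw [Nat.factorization_mul ha hb, Finsupp.add_apply]
  exact h_pow p _ _ (Nat.prime_of_mem_primeFactors hp)

theorem Nat.prod_pow_factorization_dvd (n : ℕ) (S : Finset ℕ) :
    ∏ p ∈ S, p ^ n.factorization p ∣ n := by
  rcases eq_or_ne n 0 with rfl | hn
  · exact dvd_zero _
  calc ∏ p ∈ S, p ^ n.factorization p ∣ ∏ p ∈ S ∪ n.primeFactors, p ^ n.factorization p :=
        Finset.prod_dvd_prod_of_subset _ _ _ Finset.subset_union_left
    _ = ∏ p ∈ n.primeFactors, p ^ n.factorization p :=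
        (Finset.prod_subset Finset.subset_union_right fun p _ hp => by
          rw [Finsupp.notMem_support_iff.mp (by rwa [Nat.support_factorization]), pow_zero]).symm
    _ = n := Nat.prod_factorization_pow_eq_self hn

theorem theta_eq_card_rootsMod (A B : ℤ) (n : ℕ) :
    theta A B n = Nat.card (RootsMod (X ^ 3 + C A * X + C B) n) :=
  Nat.card_congr (Equiv.subtypeEquivRight fun ρ => by simp)

theorem cubic_bezout (A B : ℤ) :
    (C (27 * B) - C (18 * A) * X) * (X ^ 3 + C A * X + C B) +
      (C (6 * A) * X ^ 2 - C (9 * B) * X + C (4 * A ^ 2)) * derivative (X ^ 3 + C A * X + C B) =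
      C (4 * A ^ 3 + 27 * B ^ 2) := by
  simp only [derivative_add, derivative_X_pow, derivative_mul, derivative_C, derivative_X, C_add,
    C_mul, C_pow, C_ofNat, Nat.cast_ofNat]
  ring

/-- There is a constant `C`, depending only on the cubic `F(x) = x³ + Ax + B` with nonzero
discriminant, such that `ϑ(ab) ≤ C·ϑ(a)·ϑ(b)` for all positive integers `a`, `b`. -/
theorem theta_submultiplicative (A B : ℤ) (hΔ : -(4 * A ^ 3 + 27 * B ^ 2) ≠ 0) :
    ∃ C : ℕ, 0 < C ∧ ∀ a b : ℕ, 0 < a → 0 < b →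
      theta A B (a * b) ≤ C * (theta A B a * theta A B b) := by
  set D := 4 * A ^ 3 + 27 * B ^ 2
  have hD0 : D ≠ 0 := neg_ne_zero.mp hΔ
  refine ⟨D.natAbs ^ 2, by positivity, fun a b ha hb => ?_⟩
  simp only [theta_eq_card_rootsMod]
  refine (Nat.le_prod_primeFactors_mul_of_multiplicative (g := fun n => Nat.card (RootsMod _ n))
    (fun m n => RootsMod.card_mul _) (RootsMod.card_one _)
    (fun p α β hp => have := Fact.mk hp; RootsMod.card_pow_add_le (cubic_bezout A B) hD0 α β)
    ha.ne' hb.ne').trans (Nat.mul_le_mul_right _ ?_)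
  calc ∏ p ∈ (a * b).primeFactors, p ^ (2 * padicValInt p D)
      = (∏ p ∈ (a * b).primeFactors, p ^ D.natAbs.factorization p) ^ 2 := by
        rw [← Finset.prod_pow]
        refine Finset.prod_congr rfl fun p hp => ?_
        rw [padicValInt, Nat.factorization_def _ (Nat.prime_of_mem_primeFactors hp), ← pow_mul,
          mul_comm]
    _ ≤ D.natAbs ^ 2 := by
        gcongr
        exact Nat.le_of_dvd (Int.natAbs_pos.mpr hD0) (Nat.prod_pow_factorization_dvd _ _)
end

section
/- For positive integers ℓ, q with gcd(ℓ, q) = 1, any δ > 0 and X ≥ 1, one has ∑_{n ≤ X, gcd(n,q)=1} φ(ℓn)/(ℓn) = (6/π²)·φ₁(ℓq)·X + O_δ(σ_{-δ}(q)·X^δ / φ₁(ℓq)), where φ is Euler's totient, φ₁(m) = ∏_{p|m}(1 + 1/p)^{-1}, and σ_{-δ}(q) = ∑_{d|q} d^{-δ}. -/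
/-!
Write `L = ℓq` and `g(d) = μ(d)/d` for `d` coprime to `L` (and `0` otherwise). For `n` coprime
to `q`, `φ(ℓn)/(ℓn) = (φ(ℓ)/ℓ) ∑_{d ∣ n} g(d)`, and removing the condition `(n, q) = 1` by
Möbius inversion over `e ∣ q` gives the exact formula
`∑_{n ≤ X, (n,q)=1} φ(ℓn)/(ℓn) = (φ(ℓ)/ℓ) ∑_{e ∣ q} μ(e) ∑_{d ≤ X/e} g(d) ⌊X/(de)⌋`.
For `Z = X/e`, replacing `⌊Z/d⌋` by `Z/d` costs `∑_{d ≤ Z} 1/d ≪ Z^δ/δ`, and completing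
`∑_{d ≤ Z} g(d)/d` to `∑_d g(d)/d = 1/L(2, χ₀ mod L) = (6/π²) ∏_{p ∣ L} (1 - p⁻²)⁻¹` costs
`Z ∑_{d > Z} d⁻² ≪ min(Z, 1) ≤ Z^δ`. Summing `(X/e)^δ` over `e ∣ q` produces `σ_{-δ}(q) X^δ`,
and the main terms add up to `(6/π²) φ₁(ℓq) X` because `∑_{e ∣ q} μ(e)/e = φ(q)/q`.
For `δ > 1` the trivial bound `X` already suffices.
-/

open Finset Real

/-- `φ₁(m) = ∏_{p | m} (1 + 1/p)⁻¹`. -/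
noncomputable def phi1 (m : ℕ) : ℝ :=
  ∏ p ∈ m.primeFactors, (1 + (p : ℝ)⁻¹)⁻¹

open Filter Topology ArithmeticFunction
open scoped Nat ArithmeticFunction.Moebius ArithmeticFunction.zeta

namespace ArithmeticFunction

theorem IsMultiplicative.prod_primeFactors_one_sub {R : Type*} [CommRing R]
    {f : ArithmeticFunction R} (hf : f.IsMultiplicative) {n : ℕ} (hn : n ≠ 0) :
    ∏ p ∈ n.primeFactors, (1 - f p) = ((μ : ArithmeticFunction R).pmul f * ζ) n := by
  have hprod : (ArithmeticFunction.prodPrimeFactors fun p => 1 - f p).IsMultiplicative :=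
    IsMultiplicative.prodPrimeFactors _
  have hsum : ((μ : ArithmeticFunction R).pmul f * ζ).IsMultiplicative :=
    (isMultiplicative_moebius.intCast.pmul hf).mul isMultiplicative_zeta.natCast
  rw [← prodPrimeFactors_apply hn, (eq_iff_eq_on_prime_powers _ hprod _ hsum).mpr]
  rintro p (_ | k) hp
  · simp [hprod.map_one, hsum.map_one]
  · rw [prodPrimeFactors_apply (pow_ne_zero _ hp.ne_zero), coe_mul_zeta_apply,
      Nat.primeFactors_prime_pow k.succ_ne_zero hp, Nat.sum_divisors_prime_pow hp,
      sum_range_succ', sum_range_succ']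
    simp [moebius_apply_prime_pow hp, moebius_apply_prime hp, hf.map_one, sub_eq_neg_add]

theorem sum_divisors_moebius (n : ℕ) :
    ∑ d ∈ n.divisors, (μ d : ℝ) = if n = 1 then 1 else 0 := by
  have h : (μ * ζ : ArithmeticFunction ℤ) n = (1 : ArithmeticFunction ℤ) n := by
    rw [moebius_mul_coe_zeta]
  rw [coe_mul_zeta_apply, one_apply] at h
  exact_mod_cast h

theorem sum_divisors_filter_dvd_moebius {q : ℕ} (hq : q ≠ 0) (n : ℕ) :
    ∑ e ∈ q.divisors with e ∣ n, (μ e : ℝ) = if n.Coprime q then 1 else 0 := by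
  have hdiv : {e ∈ q.divisors | e ∣ n} = (n.gcd q).divisors := by
    ext e
    simp [Nat.dvd_gcd_iff, hq, and_comm]
  simp only [hdiv, sum_divisors_moebius, Nat.Coprime]

end ArithmeticFunction

theorem sum_Ioc_filter_dvd_eq {M : Type*} [AddCommMonoid M] (f : ℕ → M) {e : ℕ} (he : e ≠ 0)
    (N : ℕ) : ∑ n ∈ Ioc 0 N with e ∣ n, f n = ∑ m ∈ Ioc 0 (N / e), f (e * m) := by
  symm
  refine sum_nbij' (e * ·) (· / e) (fun m hm => ?_) (fun n hn => ?_) (fun m _ => ?_)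
    (fun n hn => ?_) (fun _ _ => rfl)
  all_goals simp only [mem_filter, mem_Ioc] at *
  · have hle := (Nat.le_div_iff_mul_le (Nat.pos_of_ne_zero he)).mp hm.2
    exact ⟨⟨Nat.mul_pos (Nat.pos_of_ne_zero he) hm.1, by linarith⟩, dvd_mul_right e m⟩
  · exact ⟨Nat.div_pos (Nat.le_of_dvd hn.1.1 hn.2) (Nat.pos_of_ne_zero he),
      Nat.div_le_div_right hn.1.2⟩
  · exact Nat.mul_div_cancel_left m (Nat.pos_of_ne_zero he)
  · exact Nat.mul_div_cancel' hn.2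

theorem sum_Ioc_filter_coprime_eq (f : ℕ → ℝ) {q : ℕ} (hq : q ≠ 0) (N : ℕ) :
    ∑ n ∈ Ioc 0 N with n.Coprime q, f n =
      ∑ e ∈ q.divisors, (μ e : ℝ) * ∑ m ∈ Ioc 0 (N / e), f (e * m) := by
  calc ∑ n ∈ Ioc 0 N with n.Coprime q, f n
      = ∑ n ∈ Ioc 0 N, ∑ e ∈ q.divisors with e ∣ n, (μ e : ℝ) * f n := by
        rw [sum_filter]
        refine sum_congr rfl fun n _ => ?_
        rw [← sum_mul, sum_divisors_filter_dvd_moebius hq, ite_mul, one_mul, zero_mul]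
    _ = ∑ e ∈ q.divisors, (μ e : ℝ) * ∑ n ∈ Ioc 0 N with e ∣ n, f n := by
        simp_rw [mul_sum]
        exact sum_comm' fun n e => by simp only [mem_filter]; tauto
    _ = _ := sum_congr rfl fun e he => by
        rw [sum_Ioc_filter_dvd_eq f (Nat.pos_of_mem_divisors he).ne']

theorem totient_div_self {m : ℕ} (hm : m ≠ 0) :
    (φ m : ℝ) / m = ∏ p ∈ m.primeFactors, (1 - (p : ℝ)⁻¹) := by
  have h := congrArg (fun x : ℚ => (x : ℝ)) (Nat.totient_eq_mul_prod_factors m)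
  push_cast at h
  rw [h, mul_div_cancel_left₀ _ (Nat.cast_ne_zero.mpr hm)]

noncomputable def coprimeInv (L : ℕ) : ArithmeticFunction ℝ :=
  ⟨fun d => if d.Coprime L then (d : ℝ)⁻¹ else 0, by simp⟩

theorem coprimeInv_apply (L d : ℕ) :
    coprimeInv L d = if d.Coprime L then (d : ℝ)⁻¹ else 0 :=
  rfl

theorem isMultiplicative_coprimeInv (L : ℕ) : (coprimeInv L).IsMultiplicative := by
  refine ⟨by simp [coprimeInv_apply], fun {m n} _ => ?_⟩
  simp only [coprimeInv_apply, Nat.coprime_mul_iff_left, Nat.cast_mul, mul_inv]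
  split_ifs <;> simp_all

noncomputable def moebiusCoprimeInv (L : ℕ) : ArithmeticFunction ℝ :=
  (μ : ArithmeticFunction ℝ).pmul (coprimeInv L)

theorem abs_moebiusCoprimeInv_le (L d : ℕ) : |moebiusCoprimeInv L d| ≤ (d : ℝ)⁻¹ := by
  rw [moebiusCoprimeInv, pmul_apply, intCoe_apply, coprimeInv_apply, abs_mul]
  split_ifs
  · have hμ : |(μ d : ℝ)| ≤ 1 := by exact_mod_cast abs_moebius_le_one
    simpa using mul_le_of_le_one_left (abs_nonneg (d : ℝ)⁻¹) hμ
  · simp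

theorem moebiusCoprimeInv_mul_zeta_apply {L n : ℕ} (hL : L ≠ 0) (hn : n ≠ 0) :
    (moebiusCoprimeInv L * ζ) n = ∏ p ∈ n.primeFactors \ L.primeFactors, (1 - (p : ℝ)⁻¹) := by
  rw [moebiusCoprimeInv, ← (isMultiplicative_coprimeInv L).prod_primeFactors_one_sub hn,
    sdiff_eq_filter, prod_filter]
  refine prod_congr rfl fun p hp => ?_
  have hp := Nat.prime_of_mem_primeFactors hp
  by_cases hpL : p ∣ L <;> simp [coprimeInv_apply, hp.coprime_iff_not_dvd, hp, hpL, hL]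

theorem moebiusCoprimeInv_mul_zeta_mul_left {L e m : ℕ} (hL : L ≠ 0) (he : e ∣ L)
    (hm : m ≠ 0) : (moebiusCoprimeInv L * ζ) (e * m) = (moebiusCoprimeInv L * ζ) m := by
  have he0 : e ≠ 0 := ne_zero_of_dvd_ne_zero hL he
  rw [moebiusCoprimeInv_mul_zeta_apply hL (mul_ne_zero he0 hm),
    moebiusCoprimeInv_mul_zeta_apply hL hm, Nat.primeFactors_mul he0 hm, union_sdiff_distrib,
    sdiff_eq_empty_iff_subset.mpr (Nat.primeFactors_mono he hL), empty_union]

theorem totient_mul_div_eq {ℓ q n : ℕ} (hℓ : ℓ ≠ 0) (hq : q ≠ 0) (hn : n ≠ 0)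
    (hnq : n.Coprime q) :
    (φ (ℓ * n) : ℝ) / (ℓ * n : ℕ) = φ ℓ / ℓ * (moebiusCoprimeInv (ℓ * q) * ζ) n := by
  rw [moebiusCoprimeInv_mul_zeta_apply (mul_ne_zero hℓ hq) hn,
    totient_div_self (mul_ne_zero hℓ hn), totient_div_self hℓ, Nat.primeFactors_mul hℓ hn,
    Nat.primeFactors_mul hℓ hq, sdiff_union_distrib,
    sdiff_eq_self_of_disjoint hnq.disjoint_primeFactors, inter_eq_left.mpr sdiff_subset,
    ← union_sdiff_self_eq_union, prod_union disjoint_sdiff]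

theorem sum_divisors_moebius_div {q : ℕ} (hq : q ≠ 0) :
    ∑ e ∈ q.divisors, (μ e : ℝ) / e = φ q / q := by
  have h := moebiusCoprimeInv_mul_zeta_apply one_ne_zero hq
  rw [coe_mul_zeta_apply, Nat.primeFactors_one, sdiff_empty, ← totient_div_self hq] at h
  rw [← h]
  refine sum_congr rfl fun e _ => ?_
  simp [moebiusCoprimeInv, coprimeInv_apply, div_eq_mul_inv]

theorem LSeries_one_dirichletCharacter_two (L : ℕ) [NeZero L] :
    LSeries (fun n : ℕ => (1 : DirichletCharacter ℂ L) n) 2 =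
      (∏ p ∈ L.primeFactors, (1 - ((p : ℂ) ^ 2)⁻¹)) * (π ^ 2 / 6) := by
  have h := DirichletCharacter.LFunctionTrivChar_eq_mul_riemannZeta (N := L) (s := 2)
    (by norm_num)
  dsimp only [DirichletCharacter.LFunctionTrivChar] at h
  rw [← DirichletCharacter.LFunction_eq_LSeries 1 (by norm_num), h, riemannZeta_two]
  congr 1
  refine prod_congr rfl fun p _ => ?_
  rw [Complex.cpow_neg, show (2 : ℂ) = ((2 : ℕ) : ℂ) by norm_num, Complex.cpow_natCast]

theorem LSeries_term_one_dirichletCharacter_mul_moebius (L n : ℕ) :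
    LSeries.term ((fun n : ℕ => (1 : DirichletCharacter ℂ L) n) * fun n => (μ n : ℂ)) 2 n =
      ((moebiusCoprimeInv L n / n : ℝ) : ℂ) := by
  rcases eq_or_ne n 0 with rfl | hn
  · simp
  rw [LSeries.term_of_ne_zero hn, show (2 : ℂ) = ((2 : ℕ) : ℂ) by norm_num,
    Complex.cpow_natCast]
  simp only [moebiusCoprimeInv, pmul_apply, intCoe_apply, coprimeInv_apply, Pi.mul_apply]
  by_cases hc : n.Coprime L
  · rw [MulChar.one_apply ((ZMod.isUnit_iff_coprime n L).mpr hc), if_pos hc]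
    push_cast
    field_simp
  · rw [MulChar.map_nonunit _ (mt (ZMod.isUnit_iff_coprime n L).mp hc), if_neg hc]
    simp

theorem hasSum_moebiusCoprimeInv_div {L : ℕ} (hL : L ≠ 0) :
    HasSum (fun d => moebiusCoprimeInv L d / d)
      ((6 / π ^ 2) / ∏ p ∈ L.primeFactors, (1 - ((p : ℝ) ^ 2)⁻¹)) := by
  have : NeZero L := ⟨hL⟩
  have hs : 1 < (2 : ℂ).re := by norm_num
  have hsum : HasSum (LSeries.term ((fun n : ℕ => (1 : DirichletCharacter ℂ L) n) *
      fun n => (μ n : ℂ)) 2) (LSeries ((fun n : ℕ => (1 : DirichletCharacter ℂ L) n) *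
      fun n => (μ n : ℂ)) 2) :=
    (DirichletCharacter.LSeriesSummable_mul 1 (LSeriesSummable_moebius_iff.mpr hs)).hasSum
  rw [eq_inv_of_mul_eq_one_right (DirichletCharacter.LSeries.mul_mu_eq_one 1 hs),
    LSeries_one_dirichletCharacter_two, funext (LSeries_term_one_dirichletCharacter_mul_moebius L)]
    at hsum
  have hval : ((∏ p ∈ L.primeFactors, (1 - ((p : ℂ) ^ 2)⁻¹)) * (π ^ 2 / 6))⁻¹ =
      (((6 / π ^ 2) / ∏ p ∈ L.primeFactors, (1 - ((p : ℝ) ^ 2)⁻¹) : ℝ) : ℂ) := by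
    push_cast
    ring
  rw [hval] at hsum
  exact Complex.hasSum_ofReal.mp hsum

theorem phi1_eq {m : ℕ} (hm : m ≠ 0) :
    phi1 m = φ m / m / ∏ p ∈ m.primeFactors, (1 - ((p : ℝ) ^ 2)⁻¹) := by
  rw [totient_div_self hm, phi1, ← prod_div_distrib]
  refine prod_congr rfl fun p hp => ?_
  have hp : (2 : ℝ) ≤ p := by exact_mod_cast (Nat.prime_of_mem_primeFactors hp).two_le
  have h1 : (1 : ℝ) - ((p : ℝ) ^ 2)⁻¹ = (1 - (p : ℝ)⁻¹) * (1 + (p : ℝ)⁻¹) := by ring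
  have h2 : (1 : ℝ) - (p : ℝ)⁻¹ ≠ 0 := by
    have : (p : ℝ)⁻¹ < 1 := inv_lt_one_of_one_lt₀ (by linarith)
    linarith
  rw [h1, div_mul_cancel_left₀ h2]

theorem sum_range_succ_eq_sum_Ioc {M : Type*} [AddCommMonoid M] (a : ℕ → M) (ha : a 0 = 0)
    (n : ℕ) : ∑ i ∈ range (n + 1), a i = ∑ i ∈ Ioc 0 n, a i := by
  rw [range_eq_Ico, Ico_add_one_right_eq_Icc, Icc_eq_cons_Ioc (Nat.zero_le n), sum_cons, ha,
    zero_add]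

theorem abs_sub_sum_Ioc_le_of_hasSum {a : ℕ → ℝ} {K : ℝ} (hK : HasSum a K)
    (ha : ∀ d, |a d| ≤ ((d : ℝ) ^ 2)⁻¹) (Y : ℕ) :
    |K - ∑ d ∈ Ioc 0 Y, a d| ≤ 2 / (Y + 1) := by
  have ha0 : a 0 = 0 := abs_nonpos_iff.mp (by simpa using ha 0)
  have hlim : Tendsto (fun M => |∑ d ∈ Ioc 0 M, a d - ∑ d ∈ Ioc 0 Y, a d|) atTop
      (𝓝 |K - ∑ d ∈ Ioc 0 Y, a d|) := by
    refine ((Tendsto.sub_const ?_ _).abs)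
    have := hK.tendsto_sum_nat.comp (tendsto_add_atTop_nat 1)
    simpa [Function.comp_def, sum_range_succ_eq_sum_Ioc a ha0] using this
  refine le_of_tendsto hlim (eventually_atTop.mpr ⟨Y, fun M hM => ?_⟩)
  rw [← sum_Ioc_consecutive _ (Nat.zero_le Y) hM, add_sub_cancel_left]
  calc |∑ d ∈ Ioc Y M, a d| ≤ ∑ d ∈ Ioc Y M, ((d : ℝ) ^ 2)⁻¹ :=
        (abs_sum_le_sum_abs _ _).trans (sum_le_sum fun d _ => ha d)
    _ ≤ ∑ d ∈ Ioo Y (M + 1), ((d : ℝ) ^ 2)⁻¹ :=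
        sum_le_sum_of_subset_of_nonneg (fun d hd => by simp only [mem_Ioc, mem_Ioo] at hd ⊢; omega)
          (fun _ _ _ => by positivity)
    _ ≤ 2 / (Y + 1) := sum_Ioo_inv_sq_le Y (M + 1)

theorem div_floor_add_one_le_rpow {Z δ : ℝ} (hZ : 0 ≤ Z) (hδ : 0 ≤ δ) (hδ1 : δ ≤ 1) :
    Z / (⌊Z⌋₊ + 1) ≤ Z ^ δ := by
  rcases le_total Z 1 with hZ1 | hZ1
  · exact (div_le_self hZ (by linarith [Nat.cast_nonneg (α := ℝ) ⌊Z⌋₊])).trans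
      (self_le_rpow_of_le_one hZ hZ1 hδ1)
  · calc Z / (⌊Z⌋₊ + 1) ≤ 1 := (div_le_one (by positivity)).mpr (Nat.lt_floor_add_one Z).le
      _ ≤ Z ^ δ := one_le_rpow hZ1 hδ

theorem sum_Ioc_floor_inv_le_rpow {Z δ : ℝ} (hZ : 0 ≤ Z) (hδ : 0 < δ) :
    ∑ d ∈ Ioc 0 ⌊Z⌋₊, (d : ℝ)⁻¹ ≤ (1 + 1 / δ) * Z ^ δ := by
  rcases lt_or_ge Z 1 with hZ1 | hZ1
  · rw [Nat.floor_eq_zero.mpr hZ1, Ioc_self, sum_empty]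
    positivity
  have hharm : ∑ d ∈ Ioc 0 ⌊Z⌋₊, (d : ℝ)⁻¹ ≤ 1 + Real.log ⌊Z⌋₊ := by
    have h := harmonic_le_one_add_log ⌊Z⌋₊
    rw [harmonic_eq_sum_Icc] at h
    push_cast at h
    exact h
  have hlog : Real.log ⌊Z⌋₊ ≤ Z ^ δ / δ :=
    (log_le_log (by exact_mod_cast Nat.floor_pos.mpr hZ1) (Nat.floor_le hZ)).trans
      (log_le_rpow_div hZ hδ)
  have hone : 1 ≤ Z ^ δ := one_le_rpow hZ1 hδ.le
  calc ∑ d ∈ Ioc 0 ⌊Z⌋₊, (d : ℝ)⁻¹ ≤ Z ^ δ + Z ^ δ / δ := by linarith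
    _ = (1 + 1 / δ) * Z ^ δ := by ring

theorem abs_sum_mul_floor_div_sub_le {g : ℕ → ℝ} (hg : ∀ d, |g d| ≤ (d : ℝ)⁻¹) {K : ℝ}
    (hK : HasSum (fun d => g d / d) K) {δ Z : ℝ} (hδ : 0 < δ) (hδ1 : δ ≤ 1) (hZ : 0 ≤ Z) :
    |∑ d ∈ Ioc 0 ⌊Z⌋₊, g d * (⌊Z⌋₊ / d : ℕ) - Z * K| ≤ (3 + 1 / δ) * Z ^ δ := by
  set Y := ⌊Z⌋₊
  have hsplit : ∑ d ∈ Ioc 0 Y, g d * (Y / d : ℕ) - Z * K =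
      ∑ d ∈ Ioc 0 Y, g d * ((Y / d : ℕ) - Z / d) - Z * (K - ∑ d ∈ Ioc 0 Y, g d / d) := by
    have h : ∀ d : ℕ, g d * (Z / d) = Z * (g d / d) := fun d => by ring
    simp only [mul_sub, sum_sub_distrib, mul_sum, h]
    ring
  have hfloor : ∀ d : ℕ, |((Y / d : ℕ) : ℝ) - Z / d| ≤ 1 := fun d => by
    rw [← Nat.floor_div_natCast, abs_sub_comm,
      abs_of_nonneg (sub_nonneg.mpr (Nat.floor_le (by positivity)))]
    linarith [Nat.lt_floor_add_one (Z / d)]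
  have hmain : |∑ d ∈ Ioc 0 Y, g d * ((Y / d : ℕ) - Z / d)| ≤ (1 + 1 / δ) * Z ^ δ := by
    refine (abs_sum_le_sum_abs _ _).trans ((sum_le_sum fun d _ => ?_).trans
      (sum_Ioc_floor_inv_le_rpow hZ hδ))
    rw [abs_mul]
    simpa using mul_le_mul (hg d) (hfloor d) (abs_nonneg _) (by positivity)
  have hg2 : ∀ d : ℕ, |g d / d| ≤ ((d : ℝ) ^ 2)⁻¹ := fun d => by
    rw [abs_div, Nat.abs_cast, div_eq_mul_inv, sq, mul_inv]
    exact mul_le_mul_of_nonneg_right (hg d) (by positivity)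
  have htail : |Z * (K - ∑ d ∈ Ioc 0 Y, g d / d)| ≤ 2 * Z ^ δ := by
    rw [abs_mul, abs_of_nonneg hZ]
    calc Z * |K - ∑ d ∈ Ioc 0 Y, g d / d| ≤ Z * (2 / (Y + 1)) :=
          mul_le_mul_of_nonneg_left (abs_sub_sum_Ioc_le_of_hasSum hK hg2 Y) hZ
      _ = 2 * (Z / (Y + 1)) := by ring
      _ ≤ 2 * Z ^ δ := by gcongr; exact div_floor_add_one_le_rpow hZ hδ.le hδ1
  rw [hsplit]
  calc _ ≤ _ := abs_sub _ _
    _ ≤ (1 + 1 / δ) * Z ^ δ + 2 * Z ^ δ := add_le_add hmain htail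
    _ = (3 + 1 / δ) * Z ^ δ := by ring

theorem phi1_pos (m : ℕ) : 0 < phi1 m :=
  prod_pos fun p _ => by positivity

theorem phi1_le_one (m : ℕ) : phi1 m ≤ 1 :=
  prod_le_one (fun p _ => by positivity) fun p _ =>
    inv_le_one_of_one_le₀ (le_add_of_nonneg_right (by positivity))

section

variable {ℓ q : ℕ}

theorem sum_Ioc_filter_coprime_totient_mul_div_eq (hℓ : ℓ ≠ 0) (hq : q ≠ 0) (N : ℕ) :
    ∑ n ∈ Ioc 0 N with n.Coprime q, (φ (ℓ * n) : ℝ) / (ℓ * n : ℕ) =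
      φ ℓ / ℓ * ∑ e ∈ q.divisors, (μ e : ℝ) *
        ∑ d ∈ Ioc 0 (N / e), moebiusCoprimeInv (ℓ * q) d * (N / e / d : ℕ) := by
  calc _ = ∑ n ∈ Ioc 0 N with n.Coprime q, φ ℓ / ℓ * (moebiusCoprimeInv (ℓ * q) * ζ) n :=
        sum_congr rfl fun n hn => by
          rw [mem_filter, mem_Ioc] at hn
          exact totient_mul_div_eq hℓ hq hn.1.1.ne' hn.2
    _ = φ ℓ / ℓ * ∑ e ∈ q.divisors, (μ e : ℝ) *
          ∑ m ∈ Ioc 0 (N / e), (moebiusCoprimeInv (ℓ * q) * ζ) m := by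
        rw [← mul_sum, sum_Ioc_filter_coprime_eq _ hq]
        congr 1
        refine sum_congr rfl fun e he => congrArg _ (sum_congr rfl fun m hm => ?_)
        exact moebiusCoprimeInv_mul_zeta_mul_left (mul_ne_zero hℓ hq)
          (dvd_mul_of_dvd_right (Nat.dvd_of_mem_divisors he) ℓ) (mem_Ioc.mp hm).1.ne'
    _ = _ := by simp_rw [sum_Ioc_mul_zeta_eq_sum]

theorem six_div_pi_sq_mul_phi1_mul_eq (hℓ : ℓ ≠ 0) (hq : q ≠ 0) (hcop : ℓ.Coprime q) (X : ℝ) :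
    6 / π ^ 2 * phi1 (ℓ * q) * X = φ ℓ / ℓ * ∑ e ∈ q.divisors, (μ e : ℝ) *
      (X / e * ((6 / π ^ 2) / ∏ p ∈ (ℓ * q).primeFactors, (1 - ((p : ℝ) ^ 2)⁻¹))) := by
  have hsum : ∑ e ∈ q.divisors, (μ e : ℝ) *
      (X / e * ((6 / π ^ 2) / ∏ p ∈ (ℓ * q).primeFactors, (1 - ((p : ℝ) ^ 2)⁻¹))) =
      X * ((6 / π ^ 2) / ∏ p ∈ (ℓ * q).primeFactors, (1 - ((p : ℝ) ^ 2)⁻¹)) * (φ q / q) := by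
    rw [← sum_divisors_moebius_div hq, mul_sum]
    exact sum_congr rfl fun e _ => by ring
  rw [hsum, phi1_eq (mul_ne_zero hℓ hq), Nat.totient_mul hcop]
  push_cast
  ring

theorem abs_sum_totient_ratio_sub_le (hℓ : ℓ ≠ 0) (hq : q ≠ 0) (hcop : ℓ.Coprime q)
    {δ X : ℝ} (hδ : 0 < δ) (hδ1 : δ ≤ 1) (hX : 0 ≤ X) :
    |∑ n ∈ Ioc 0 ⌊X⌋₊ with n.Coprime q, (φ (ℓ * n) : ℝ) / (ℓ * n : ℕ) -
        6 / π ^ 2 * phi1 (ℓ * q) * X| ≤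
      (3 + 1 / δ) * (∑ d ∈ q.divisors, (d : ℝ) ^ (-δ)) * X ^ δ := by
  set K := (6 / π ^ 2) / ∏ p ∈ (ℓ * q).primeFactors, (1 - ((p : ℝ) ^ 2)⁻¹)
  have hK := hasSum_moebiusCoprimeInv_div (mul_ne_zero hℓ hq)
  rw [sum_Ioc_filter_coprime_totient_mul_div_eq hℓ hq, six_div_pi_sq_mul_phi1_mul_eq hℓ hq hcop,
    ← mul_sub, ← sum_sub_distrib, abs_mul]
  have hF : |(φ ℓ / ℓ : ℝ)| ≤ 1 := by
    rw [abs_of_nonneg (by positivity)]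
    exact div_le_one_of_le₀ (by exact_mod_cast Nat.totient_le ℓ) (Nat.cast_nonneg ℓ)
  have he : ∀ e ∈ q.divisors,
      |(μ e : ℝ) * ∑ d ∈ Ioc 0 (⌊X⌋₊ / e), moebiusCoprimeInv (ℓ * q) d * (⌊X⌋₊ / e / d : ℕ) -
        (μ e : ℝ) * (X / e * K)| ≤ (3 + 1 / δ) * X ^ δ * (e : ℝ) ^ (-δ) := by
    intro e he
    have he0 : (0 : ℝ) < e := by exact_mod_cast Nat.pos_of_mem_divisors he
    have hZ := abs_sum_mul_floor_div_sub_le (abs_moebiusCoprimeInv_le (ℓ * q)) hK hδ hδ1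
      (div_nonneg hX he0.le)
    rw [Nat.floor_div_natCast, div_rpow hX he0.le] at hZ
    have hμ : |(μ e : ℝ)| ≤ 1 := by exact_mod_cast abs_moebius_le_one
    rw [← mul_sub, abs_mul, rpow_neg he0.le]
    calc _ ≤ 1 * ((3 + 1 / δ) * (X ^ δ / e ^ δ)) := mul_le_mul hμ hZ (abs_nonneg _) zero_le_one
      _ = _ := by ring
  calc _ ≤ 1 * ∑ e ∈ q.divisors, (3 + 1 / δ) * X ^ δ * (e : ℝ) ^ (-δ) :=
        mul_le_mul hF ((abs_sum_le_sum_abs _ _).trans (sum_le_sum he)) (abs_nonneg _)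
          zero_le_one
    _ = _ := by rw [one_mul, ← mul_sum]; ring

theorem abs_sum_totient_ratio_sub_le_self {X : ℝ} (hX : 0 ≤ X) :
    |∑ n ∈ Ioc 0 ⌊X⌋₊ with n.Coprime q, (φ (ℓ * n) : ℝ) / (ℓ * n : ℕ) -
        6 / π ^ 2 * phi1 (ℓ * q) * X| ≤ X := by
  refine abs_sub_le_of_nonneg_of_le (by positivity) ?_ (by have := phi1_pos (ℓ * q); positivity) ?_
  · calc _ ≤ ∑ n ∈ Ioc 0 ⌊X⌋₊ with n.Coprime q, (1 : ℝ) :=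
          sum_le_sum fun n _ => div_le_one_of_le₀ (by exact_mod_cast Nat.totient_le _)
            (Nat.cast_nonneg _)
      _ ≤ ∑ n ∈ Ioc 0 ⌊X⌋₊, (1 : ℝ) :=
          sum_le_sum_of_subset_of_nonneg (filter_subset _ _) fun _ _ _ => zero_le_one
      _ ≤ X := by simpa using Nat.floor_le hX
  · have hπ : 6 / π ^ 2 ≤ 1 := by
      rw [div_le_one (by positivity)]
      nlinarith [pi_gt_three]
    have h0 := phi1_pos (ℓ * q)
    have h1 := phi1_le_one (ℓ * q)
    calc 6 / π ^ 2 * phi1 (ℓ * q) * X ≤ 1 * 1 * X := by gcongr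
      _ = X := by ring

end

/-- For coprime `ℓ, q ≥ 1`, any `δ > 0` and `X ≥ 1`,
`∑_{n ≤ X, (n,q)=1} φ(ℓn)/(ℓn) = (6/π²)·φ₁(ℓq)·X + O_δ(σ_{-δ}(q)·X^δ/φ₁(ℓq))`. -/
theorem sum_totient_ratio_coprime (δ : ℝ) (hδ : 0 < δ) :
    ∃ C : ℝ, 0 < C ∧ ∀ ℓ q : ℕ, 0 < ℓ → 0 < q → Nat.Coprime ℓ q → ∀ X : ℝ, 1 ≤ X →
      |(∑ n ∈ (Finset.Icc 1 ⌊X⌋₊).filter (fun n => n.Coprime q),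
            (Nat.totient (ℓ * n) : ℝ) / (ℓ * n : ℕ))
          - (6 / π ^ 2) * phi1 (ℓ * q) * X|
        ≤ C * (∑ d ∈ q.divisors, (d : ℝ) ^ (-δ)) * X ^ δ / phi1 (ℓ * q) := by
  refine ⟨3 + 1 / δ, by positivity, fun ℓ q hℓ hq hcop X hX => ?_⟩
  have hσ : 1 ≤ ∑ d ∈ q.divisors, (d : ℝ) ^ (-δ) := by
    simpa using single_le_sum (f := fun d : ℕ => (d : ℝ) ^ (-δ)) (fun d _ => by positivity)
      (Nat.one_mem_divisors.mpr hq.ne')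
  rw [le_div_iff₀ (phi1_pos _), show Icc 1 ⌊X⌋₊ = Ioc 0 ⌊X⌋₊ from Icc_add_one_left_eq_Ioc 0 _]
  refine (mul_le_of_le_one_right (abs_nonneg _) (phi1_le_one _)).trans ?_
  rcases le_or_gt δ 1 with hδ1 | hδ1
  · exact abs_sum_totient_ratio_sub_le hℓ.ne' hq.ne' hcop hδ hδ1 (by linarith)
  · calc _ ≤ X := abs_sum_totient_ratio_sub_le_self (by linarith)
      _ ≤ X ^ δ := self_le_rpow_of_one_le hX hδ1.le
      _ ≤ (3 + 1 / δ) * (∑ d ∈ q.divisors, (d : ℝ) ^ (-δ)) * X ^ δ :=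
          le_mul_of_one_le_left (by positivity) (one_le_mul_of_one_le_of_one_le
            (by linarith [one_div_pos.mpr hδ]) hσ)
end

section
/- Let d ≥ 1 be a square-free integer and (x₀, y, z₀) ∈ ℤ × ℤ_{≥1} × ℤ_{≥1} with gcd(x₀, y, z₀) = 1 and d·y²·z₀ = x₀³ + A·x₀·z₀² + B·z₀³. Then there exists a unique quadruple (d₀, d₁, z, x) ∈ ℤ_{≥1}³ × ℤ such that d = d₀d₁, x₀ = d₁xz, z₀ = d₁²z³, gcd(xy, d₁z) = 1, and d₀y² = x³ + A·x·(d₁z²)² + B·(d₁z²)³. -/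
/-!
Put `g = gcd(x₀, z₀)`, `x₀ = g x`, `z₀ = g z`; the equation becomes `d y² z = g² F(x, z)`.
As `F(x, z) ≡ x³ (mod z)` is prime to `z`, we get `g² = z t`. The cofactor `t` is prime to `y`
(because `g` is), so `t ∣ d`; hence `t` is square-free and divides `g`, say `g = t w`, which gives
`z = t w²` and the quadruple `(d / t, t, w, x)`. Conversely every such quadruple has
`d₁ z = gcd(x₀, z₀)`, and this determines it.
-/

section CubicForm

variable {R : Type*} [CommRing R]

def cubicForm (A B x z : R) : R := x ^ 3 + A * x * z ^ 2 + B * z ^ 3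

lemma cubicForm_mul (A B g x z : R) :
    cubicForm A B (g * x) (g * z) = g ^ 3 * cubicForm A B x z := by
  unfold cubicForm; ring

lemma isCoprime_cubicForm {x z : R} (h : IsCoprime x z) (A B : R) :
    IsCoprime z (cubicForm A B x z) := by
  have : cubicForm A B x z = x ^ 3 + z * (A * x * z + B * z ^ 2) := by unfold cubicForm; ring
  rw [this]
  exact (h.symm.pow_right (n := 3)).add_mul_left_right _

end CubicForm

/-- `T = (d₀, d₁, z, x)`. -/
def IsTwistCoords (A B d x₀ y z₀ : ℤ) (T : ℤ × ℤ × ℤ × ℤ) : Prop :=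
  1 ≤ T.1 ∧ 1 ≤ T.2.1 ∧ 1 ≤ T.2.2.1 ∧
    d = T.1 * T.2.1 ∧
    x₀ = T.2.1 * T.2.2.2 * T.2.2.1 ∧
    z₀ = T.2.1 ^ 2 * T.2.2.1 ^ 3 ∧
    Int.gcd (T.2.2.2 * y) (T.2.1 * T.2.2.1) = 1 ∧
    T.1 * y ^ 2 = cubicForm A B T.2.2.2 (T.2.1 * T.2.2.1 ^ 2)

lemma exists_twist_factor {A B d y g x z : ℤ} (hd : Squarefree d) (hg : 0 < g) (hz : 0 < z)
    (hxz : IsCoprime x z) (hgy : IsCoprime g y)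
    (h : d * y ^ 2 * z = g ^ 2 * cubicForm A B x z) :
    ∃ t w : ℤ, 0 < t ∧ 0 < w ∧ t ∣ d ∧ g = t * w ∧ z = t * w ^ 2 ∧
      d * y ^ 2 = t * cubicForm A B x z := by
  obtain ⟨t, hgzt⟩ : z ∣ g ^ 2 :=
    (isCoprime_cubicForm hxz A B).dvd_of_dvd_mul_right ⟨d * y ^ 2, by linear_combination -h⟩
  have ht : 0 < t := pos_of_mul_pos_right (hgzt ▸ pow_pos hg 2) hz.le
  have hdyt : d * y ^ 2 = t * cubicForm A B x z :=
    mul_left_cancel₀ hz.ne' (by linear_combination h + cubicForm A B x z * hgzt)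
  have hty : IsCoprime t y :=
    (hgy.pow_left (m := 2)).of_isCoprime_of_dvd_left ⟨z, by linear_combination hgzt⟩
  have htd : t ∣ d := (hty.pow_right (n := 2)).dvd_of_dvd_mul_right ⟨_, hdyt⟩
  obtain ⟨w, rfl⟩ : t ∣ g :=
    ((hd.squarefree_of_dvd htd).dvd_pow_iff_dvd two_ne_zero).mp ⟨z, by linear_combination hgzt⟩
  refine ⟨t, w, ht, pos_of_mul_pos_right hg ht.le, htd, rfl, ?_, hdyt⟩
  exact mul_left_cancel₀ ht.ne' (by linear_combination -hgzt)

lemma exists_isTwistCoords {A B d x₀ y z₀ : ℤ} (hd : Squarefree d) (hd0 : 0 < d)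
    (hz₀ : 0 < z₀)
    (hprim : Int.gcd x₀ (Int.gcd y z₀) = 1) (heq : d * y ^ 2 * z₀ = cubicForm A B x₀ z₀) :
    ∃ T, IsTwistCoords A B d x₀ y z₀ T := by
  have hgy : IsCoprime (Int.gcd x₀ z₀ : ℤ) y := by
    rw [Int.isCoprime_iff_gcd_eq_one, Int.gcd_assoc, Int.gcd_comm z₀, hprim]
  have hg : 0 < Int.gcd x₀ z₀ := Int.gcd_pos_of_ne_zero_right x₀ hz₀.ne'
  obtain ⟨x, z, hxz, hx₀, hz₀'⟩ := Int.exists_gcd_one hg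
  replace hg : (0 : ℤ) < Int.gcd x₀ z₀ := Int.natCast_pos.mpr hg
  generalize (Int.gcd x₀ z₀ : ℤ) = g at hg hgy hx₀ hz₀'
  subst hx₀ hz₀'
  have hz : 0 < z := pos_of_mul_pos_left hz₀ hg.le
  have hxz : IsCoprime x z := Int.isCoprime_iff_gcd_eq_one.mpr hxz
  obtain ⟨t, w, ht, hw, ⟨d₀, rfl⟩, rfl, rfl, hdt⟩ := exists_twist_factor hd hg hz hxz hgy
    (mul_left_cancel₀ hg.ne' (by
      rw [mul_comm x, mul_comm z, cubicForm_mul] at heq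
      linear_combination heq))
  have hd₀ : 0 < d₀ := pos_of_mul_pos_right hd0 ht.le
  have hcop : IsCoprime (x * y) (t * w) :=
    (hxz.of_isCoprime_of_dvd_right ⟨w, by ring⟩).mul_left hgy.symm
  refine ⟨(d₀, t, w, x), hd₀, ht, hw, mul_comm _ _, by ring, by ring,
    Int.isCoprime_iff_gcd_eq_one.mp hcop, mul_left_cancel₀ ht.ne' (by linear_combination hdt)⟩

lemma gcd_mul_mul_mul_pow {d₁ z x : ℤ} (h : IsCoprime x (d₁ * z)) :
    Int.gcd (d₁ * x * z) (d₁ ^ 2 * z ^ 3) = (d₁ * z).natAbs := by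
  have : IsCoprime x (d₁ * z ^ 2) :=
    (h.pow_right (n := 2)).of_isCoprime_of_dvd_right ⟨d₁, by ring⟩
  rw [show d₁ * x * z = (d₁ * z) * x by ring,
    show d₁ ^ 2 * z ^ 3 = (d₁ * z) * (d₁ * z ^ 2) by ring, Int.gcd_mul_left,
    Int.isCoprime_iff_gcd_eq_one.mp this, mul_one]

namespace IsTwistCoords

variable {A B d x₀ y z₀ : ℤ} {T T' : ℤ × ℤ × ℤ × ℤ}

lemma gcd_eq (hT : IsTwistCoords A B d x₀ y z₀ T) :
    (Int.gcd x₀ z₀ : ℤ) = T.2.1 * T.2.2.1 := by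
  obtain ⟨-, h₁, hz, -, rfl, rfl, hgcd, -⟩ := hT
  rw [gcd_mul_mul_mul_pow (Int.isCoprime_iff_gcd_eq_one.mpr hgcd).of_mul_left_left,
    Int.natAbs_of_nonneg (by positivity)]

lemma eq (hT : IsTwistCoords A B d x₀ y z₀ T) (hT' : IsTwistCoords A B d x₀ y z₀ T') :
    T = T' := by
  have hg := hT.gcd_eq.symm.trans hT'.gcd_eq
  obtain ⟨D₀, D₁, Z, X⟩ := T
  obtain ⟨D₀', D₁', Z', X'⟩ := T'
  obtain ⟨-, h₁, hZ, hd, hx, hz, -, -⟩ := hT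
  obtain ⟨-, -, -, hd', hx', hz', -, -⟩ := hT'
  dsimp only at *
  have hg0 : D₁ * Z ≠ 0 := by positivity
  have hZZ : Z = Z' := mul_left_cancel₀ (pow_ne_zero 2 hg0)
    (by linear_combination hz' - hz - (D₁ * Z + D₁' * Z') * Z' * hg)
  subst hZZ
  have hDD : D₁ = D₁' := mul_right_cancel₀ (by positivity : Z ≠ 0) hg
  subst hDD
  have hXX : X = X' := mul_left_cancel₀ hg0 (by linear_combination hx' - hx)
  have hDD₀ : D₀ = D₀' := mul_right_cancel₀ (by positivity : D₁ ≠ 0) (hd.symm.trans hd')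
  rw [hXX, hDD₀]

end IsTwistCoords

theorem twist_point_coordinates_general (A B : ℤ)
    (d : ℕ) (hd : Squarefree d)
    (x₀ y z₀ : ℤ) (hz₀ : 1 ≤ z₀)
    (hprim : Int.gcd x₀ (Int.gcd y z₀) = 1)
    (heq : (d : ℤ) * y ^ 2 * z₀ = x₀ ^ 3 + A * x₀ * z₀ ^ 2 + B * z₀ ^ 3) :
    ∃! T : ℤ × ℤ × ℤ × ℤ,
      1 ≤ T.1 ∧ 1 ≤ T.2.1 ∧ 1 ≤ T.2.2.1 ∧
      (d : ℤ) = T.1 * T.2.1 ∧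
      x₀ = T.2.1 * T.2.2.2 * T.2.2.1 ∧
      z₀ = T.2.1 ^ 2 * T.2.2.1 ^ 3 ∧
      Int.gcd (T.2.2.2 * y) (T.2.1 * T.2.2.1) = 1 ∧
      T.1 * y ^ 2 = T.2.2.2 ^ 3 + A * T.2.2.2 * (T.2.1 * T.2.2.1 ^ 2) ^ 2
        + B * (T.2.1 * T.2.2.1 ^ 2) ^ 3 := by
  obtain ⟨T, hT⟩ := exists_isTwistCoords (Int.squarefree_natCast.mpr hd)
    (Int.natCast_pos.mpr (Nat.pos_of_ne_zero hd.ne_zero)) hz₀ hprim heq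
  exact ⟨T, hT, fun T' hT' => IsTwistCoords.eq hT' hT⟩

/-- Coordinates of rational points on quadratic twists: every primitive integer solution
`(x₀, y, z₀)` of `d y² z₀ = x₀³ + A x₀ z₀² + B z₀³` with `d` square-free decomposes uniquely as
`d = d₀d₁`, `x₀ = d₁ x z`, `z₀ = d₁² z³` with `gcd(xy, d₁z) = 1` and
`d₀ y² = x³ + A x (d₁z²)² + B (d₁z²)³`.  The tuple is `T = (d₀, d₁, z, x)`. -/
theorem twist_point_coordinates (A B : ℤ) (hΔ : -(4 * A ^ 3 + 27 * B ^ 2) ≠ 0)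
    (d : ℕ) (hd : Squarefree d) (hd1 : 1 ≤ d)
    (x₀ y z₀ : ℤ) (hy : 1 ≤ y) (hz₀ : 1 ≤ z₀)
    (hprim : Int.gcd x₀ (Int.gcd y z₀) = 1)
    (heq : (d : ℤ) * y ^ 2 * z₀ = x₀ ^ 3 + A * x₀ * z₀ ^ 2 + B * z₀ ^ 3) :
    ∃! T : ℤ × ℤ × ℤ × ℤ,
      1 ≤ T.1 ∧ 1 ≤ T.2.1 ∧ 1 ≤ T.2.2.1 ∧
      (d : ℤ) = T.1 * T.2.1 ∧
      x₀ = T.2.1 * T.2.2.2 * T.2.2.1 ∧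
      z₀ = T.2.1 ^ 2 * T.2.2.1 ^ 3 ∧
      Int.gcd (T.2.2.2 * y) (T.2.1 * T.2.2.1) = 1 ∧
      T.1 * y ^ 2 = T.2.2.2 ^ 3 + A * T.2.2.2 * (T.2.1 * T.2.2.1 ^ 2) ^ 2
        + B * (T.2.1 * T.2.2.1 ^ 2) ^ 3 :=
  twist_point_coordinates_general A B d hd x₀ y z₀ hz₀ hprim heq
end

section
/- Let (m₁, m₂, q) ∈ ℤ³ with gcd(m₁, m₂, q) = 1 and q ≠ 0, and let X₁, X₂ > 0. Then the number of primitive pairs (x₁, x₂) ∈ ℤ² (i.e. gcd(x₁,x₂)=1) with |x₁| ≤ X₁, |x₂| ≤ X₂ and x₁m₁ + x₂m₂ ≡ 0 mod q is O(X₁X₂/|q| + 1), with an absolute implied constant. -/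
/-!
Fix a solution `v` in the box and let `N ≤ 1` be its size relative to the box. Since
`gcd (m₁, m₂, q) = 1`, every solution `u` has `q ∣ det (u, v)`. Sort the solutions by `det (u, v)`:
the value `0` is taken only at `±v`, by primitivity; any other value is taken along a line
parallel to `v`, which meets the box in `O(1 / N)` lattice points; and `det (u, v)` is a nonzero
multiple of `q` of size `O(N X₁ X₂)`, so only `O(N X₁ X₂ / |q|)` such values occur.
-/

open Finset

def cross (u v : ℤ × ℤ) : ℤ := u.1 * v.2 - u.2 * v.1

noncomputable def boxNorm (X₁ X₂ : ℝ) (u : ℤ × ℤ) : ℝ :=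
  max (|(u.1 : ℝ)| / X₁) (|(u.2 : ℝ)| / X₂)

lemma abs_intCast_le_iff_floor (n : ℤ) (X : ℝ) : |(n : ℝ)| ≤ X ↔ -⌊X⌋ ≤ n ∧ n ≤ ⌊X⌋ := by
  rw [← Int.cast_abs, ← Int.le_floor, abs_le]

lemma card_le_of_injOn_abs_sub_le {α : Type*} {s : Finset α} {f : α → ℤ} (c : ℤ) {R : ℝ}
    (hR : 0 ≤ R) (hf : ∀ x ∈ s, |((f x - c : ℤ) : ℝ)| ≤ R) (hinj : Set.InjOn f s) :
    (#s : ℝ) ≤ 2 * R + 1 := by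
  have hcard : #s ≤ #(Icc (c - ⌊R⌋) (c + ⌊R⌋)) := by
    refine card_le_card_of_injOn f (fun x hx => ?_) hinj
    have := (abs_intCast_le_iff_floor _ R).1 (hf x hx)
    simp only [coe_Icc, Set.mem_Icc]
    omega
  rw [Int.card_Icc] at hcard
  have hfloor : 0 ≤ ⌊R⌋ := Int.floor_nonneg.2 hR
  calc (#s : ℝ) ≤ ((2 * ⌊R⌋ + 1 : ℤ) : ℝ) := by
        exact_mod_cast (by omega : (#s : ℤ) ≤ 2 * ⌊R⌋ + 1)
    _ ≤ 2 * R + 1 := by push_cast; linarith [Int.floor_le R]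

lemma card_le_of_dvd_of_abs_le {D : Finset ℤ} {q : ℤ} (hq : q ≠ 0) {R : ℝ} (hR : 0 ≤ R)
    (hD : ∀ e ∈ D, q ∣ e ∧ e ≠ 0 ∧ |(e : ℝ)| ≤ R) : (#D : ℝ) ≤ 2 * R / |(q : ℝ)| := by
  have hq' : (0 : ℝ) < |(q : ℝ)| := by positivity
  set M := ⌊R / |(q : ℝ)|⌋
  have hcard : #D ≤ #((Icc (-M) M).erase 0) := by
    refine card_le_card_of_injOn (· / q) (fun e he => ?_) (fun e he e' he' h => ?_)
    · obtain ⟨⟨k, rfl⟩, hk, hkR⟩ := hD e he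
      have hk0 : k ≠ 0 := by rintro rfl; simp at hk
      have : |(k : ℝ)| ≤ R / |(q : ℝ)| := by
        rw [le_div_iff₀ hq', mul_comm, ← abs_mul]; exact_mod_cast hkR
      simp only [Int.mul_ediv_cancel_left _ hq, coe_erase, coe_Icc, Set.mem_sdiff, Set.mem_Icc,
        Set.mem_singleton_iff]
      exact ⟨(abs_intCast_le_iff_floor k _).1 this, hk0⟩
    · exact (Int.ediv_left_inj (hD e he).1 (hD e' he').1).1 h
  rw [card_erase_of_mem (by simp [M, Int.floor_nonneg.2 (by positivity : 0 ≤ R / |(q : ℝ)|)]),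
    Int.card_Icc] at hcard
  have hfloor : 0 ≤ M := Int.floor_nonneg.2 (by positivity)
  calc (#D : ℝ) ≤ ((2 * M : ℤ) : ℝ) := by exact_mod_cast (by omega : (#D : ℤ) ≤ 2 * M)
    _ ≤ 2 * R / |(q : ℝ)| := by
      push_cast; rw [mul_div_assoc]; linarith [Int.floor_le (R / |(q : ℝ)|)]

lemma eq_smul_of_cross_eq_zero {u v : ℤ × ℤ} {a b : ℤ} (hab : a * v.1 + b * v.2 = 1)
    (h : cross u v = 0) : u = (a * u.1 + b * u.2) • v := by
  unfold cross at h
  ext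
  · simp only [Prod.smul_fst, smul_eq_mul]; linear_combination -u.1 * hab + b * h
  · simp only [Prod.smul_snd, smul_eq_mul]; linear_combination -u.2 * hab - a * h

lemma eq_or_eq_neg_of_cross_eq_zero {u v : ℤ × ℤ} (hu : Int.gcd u.1 u.2 = 1)
    (hv : Int.gcd v.1 v.2 = 1) (h : cross u v = 0) : u = v ∨ u = -v := by
  obtain ⟨a, b, hab⟩ := Int.isCoprime_iff_gcd_eq_one.2 hv
  have huv := eq_smul_of_cross_eq_zero hab h
  have hk : (a * u.1 + b * u.2).natAbs = 1 := by
    rw [huv] at hu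
    simpa [Int.gcd_mul_left, hv] using hu
  rcases Int.natAbs_eq_iff.1 hk with hk | hk
  · left; rw [huv, hk]; simp
  · right; rw [huv, hk]; simp

lemma dvd_cross_of_dvd {m₁ m₂ q : ℤ} (hg : Int.gcd m₁ (Int.gcd m₂ q) = 1) {u v : ℤ × ℤ}
    (hu : q ∣ u.1 * m₁ + u.2 * m₂) (hv : q ∣ v.1 * m₁ + v.2 * m₂) : q ∣ cross u v := by
  obtain ⟨a, b, hab⟩ := Int.isCoprime_iff_gcd_eq_one.2 hg
  have hbezout := Int.gcd_eq_gcd_ab m₂ q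
  -- `mᵢ * cross u v` is a combination of the two congruences; Bézout for `(m₁, m₂, q)` then
  -- recovers `cross u v` itself.
  have key : cross u v = a * (v.2 * (u.1 * m₁ + u.2 * m₂) - u.2 * (v.1 * m₁ + v.2 * m₂)) +
      b * Int.gcdA m₂ q * (u.1 * (v.1 * m₁ + v.2 * m₂) - v.1 * (u.1 * m₁ + u.2 * m₂)) +
      b * Int.gcdB m₂ q * cross u v * q := by
    unfold cross
    linear_combination (-(u.1 * v.2 - u.2 * v.1)) * hab + b * (u.1 * v.2 - u.2 * v.1) * hbezout
  rw [key]
  exact ((((hu.mul_left _).sub (hv.mul_left _)).mul_left _).add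
    (((hv.mul_left _).sub (hu.mul_left _)).mul_left _)).add (dvd_mul_left _ _)

lemma boxNorm_le_iff {X₁ X₂ : ℝ} (hX₁ : 0 < X₁) (hX₂ : 0 < X₂) {u : ℤ × ℤ} {c : ℝ} :
    boxNorm X₁ X₂ u ≤ c ↔ |(u.1 : ℝ)| ≤ c * X₁ ∧ |(u.2 : ℝ)| ≤ c * X₂ := by
  rw [boxNorm, max_le_iff, div_le_iff₀ hX₁, div_le_iff₀ hX₂]

lemma boxNorm_pos {X₁ X₂ : ℝ} (hX₁ : 0 < X₁) (hX₂ : 0 < X₂) {u : ℤ × ℤ}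
    (hu : Int.gcd u.1 u.2 = 1) : 0 < boxNorm X₁ X₂ u := by
  by_cases h : u.1 = 0
  · have : u.2 ≠ 0 := by rintro h'; simp [h, h'] at hu
    exact lt_max_of_lt_right (by positivity)
  · exact lt_max_of_lt_left (by positivity)

lemma abs_cross_le {X₁ X₂ : ℝ} (hX₁ : 0 < X₁) (hX₂ : 0 < X₂) (u v : ℤ × ℤ) :
    |(cross u v : ℝ)| ≤ 2 * X₁ * X₂ * boxNorm X₁ X₂ u * boxNorm X₁ X₂ v := by
  obtain ⟨hu₁, hu₂⟩ := (boxNorm_le_iff hX₁ hX₂).1 (le_refl (boxNorm X₁ X₂ u))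
  obtain ⟨hv₁, hv₂⟩ := (boxNorm_le_iff hX₁ hX₂).1 (le_refl (boxNorm X₁ X₂ v))
  calc |(cross u v : ℝ)| ≤ |(u.1 : ℝ)| * |(v.2 : ℝ)| + |(u.2 : ℝ)| * |(v.1 : ℝ)| := by
        simp only [cross, Int.cast_sub, Int.cast_mul, ← abs_mul]; exact abs_sub _ _
    _ ≤ boxNorm X₁ X₂ u * X₁ * (boxNorm X₁ X₂ v * X₂) +
        boxNorm X₁ X₂ u * X₂ * (boxNorm X₁ X₂ v * X₁) :=
      add_le_add (mul_le_mul hu₁ hv₂ (abs_nonneg _) ((abs_nonneg _).trans hu₁))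
        (mul_le_mul hu₂ hv₁ (abs_nonneg _) ((abs_nonneg _).trans hu₂))
    _ = _ := by ring

lemma boxNorm_zsmul (X₁ X₂ : ℝ) (k : ℤ) (u : ℤ × ℤ) :
    boxNorm X₁ X₂ (k • u) = |(k : ℝ)| * boxNorm X₁ X₂ u := by
  simp only [boxNorm, Prod.smul_fst, Prod.smul_snd, smul_eq_mul, Int.cast_mul, abs_mul,
    mul_div_assoc]
  exact (mul_max_of_nonneg _ _ (abs_nonneg (k : ℝ))).symm

lemma boxNorm_sub_le {X₁ X₂ : ℝ} (hX₁ : 0 ≤ X₁) (hX₂ : 0 ≤ X₂) (u w : ℤ × ℤ) :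
    boxNorm X₁ X₂ (u - w) ≤ boxNorm X₁ X₂ u + boxNorm X₁ X₂ w := by
  simp only [boxNorm, Prod.fst_sub, Prod.snd_sub, Int.cast_sub]
  refine max_le ?_ ?_
  · calc |(u.1 : ℝ) - w.1| / X₁ ≤ (|(u.1 : ℝ)| + |(w.1 : ℝ)|) / X₁ := by gcongr; exact abs_sub _ _
      _ ≤ _ := by rw [add_div]; gcongr <;> exact le_max_left _ _
  · calc |(u.2 : ℝ) - w.2| / X₂ ≤ (|(u.2 : ℝ)| + |(w.2 : ℝ)|) / X₂ := by gcongr; exact abs_sub _ _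
      _ ≤ _ := by rw [add_div]; gcongr <;> exact le_max_right _ _

lemma card_filter_cross_eq_le {X₁ X₂ : ℝ} (hX₁ : 0 < X₁) (hX₂ : 0 < X₂) {T : Finset (ℤ × ℤ)}
    (hT : ∀ u ∈ T, boxNorm X₁ X₂ u ≤ 1) {v : ℤ × ℤ} (hv : Int.gcd v.1 v.2 = 1) (e : ℤ) :
    (#{u ∈ T | cross u v = e} : ℝ) ≤ 4 / boxNorm X₁ X₂ v + 1 := by
  have hN := boxNorm_pos hX₁ hX₂ hv
  obtain ⟨a, b, hab⟩ := Int.isCoprime_iff_gcd_eq_one.2 hv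
  set ℓ : ℤ × ℤ → ℤ := fun u => a * u.1 + b * u.2
  rcases {u ∈ T | cross u v = e}.eq_empty_or_nonempty with hF | ⟨u₀, hu₀⟩
  · rw [hF, card_empty, Nat.cast_zero]; positivity
  have hline : ∀ u ∈ {u ∈ T | cross u v = e}, u - u₀ = (ℓ u - ℓ u₀) • v := by
    intro u hu
    rw [mem_filter] at hu hu₀
    have h := eq_smul_of_cross_eq_zero hab (u := u - u₀)
      (by simp only [cross, Prod.fst_sub, Prod.snd_sub] at hu hu₀ ⊢
          linear_combination hu.2 - hu₀.2)
    rw [h]; congr 1; simp only [ℓ, Prod.fst_sub, Prod.snd_sub]; ring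
  refine (card_le_of_injOn_abs_sub_le (f := ℓ) (ℓ u₀) (by positivity : 0 ≤ 2 / boxNorm X₁ X₂ v)
    (fun u hu => ?_) (fun u hu w hw h => ?_)).trans_eq (by ring)
  · have hsub := boxNorm_sub_le hX₁.le hX₂.le u u₀
    rw [hline u hu, boxNorm_zsmul] at hsub
    rw [le_div_iff₀ hN]
    linarith [hT u (mem_filter.1 hu).1, hT u₀ (mem_filter.1 hu₀).1]
  · have h' := hline u hu
    rw [h, ← hline w hw] at h'
    simpa using h'

theorem card_le_of_forall_dvd_cross {q : ℤ} (hq : q ≠ 0) {X₁ X₂ : ℝ} (hX₁ : 0 < X₁)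
    (hX₂ : 0 < X₂) {T : Finset (ℤ × ℤ)} (hprim : ∀ u ∈ T, Int.gcd u.1 u.2 = 1)
    (hbox : ∀ u ∈ T, boxNorm X₁ X₂ u ≤ 1) {v : ℤ × ℤ} (hv : v ∈ T)
    (hdvd : ∀ u ∈ T, q ∣ cross u v) :
    (#T : ℝ) ≤ 2 + 20 * (X₁ * X₂ / |(q : ℝ)|) := by
  set N := boxNorm X₁ X₂ v
  set P := X₁ * X₂ / |(q : ℝ)|
  have hN : 0 < N := boxNorm_pos hX₁ hX₂ (hprim v hv)
  have hP : 0 < P := by positivity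
  have hT₀ : #{u ∈ T | cross u v = 0} ≤ 2 := by
    refine (card_le_card (t := {v, -v}) fun u hu => ?_).trans card_le_two
    rw [mem_filter] at hu
    simpa using eq_or_eq_neg_of_cross_eq_zero (hprim u hu.1) (hprim v hv) hu.2
  set T' := {u ∈ T | ¬cross u v = 0}
  have hD : (#(T'.image (cross · v)) : ℝ) ≤ 4 * N * P := by
    refine (card_le_of_dvd_of_abs_le hq (by positivity : 0 ≤ 2 * X₁ * X₂ * N)
      fun e he => ?_).trans_eq (by ring)
    obtain ⟨u, hu, rfl⟩ := mem_image.1 he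
    rw [mem_filter] at hu
    refine ⟨hdvd u hu.1, hu.2, (abs_cross_le hX₁ hX₂ u v).trans ?_⟩
    calc _ = 2 * X₁ * X₂ * N * boxNorm X₁ X₂ u := by ring
      _ ≤ 2 * X₁ * X₂ * N := mul_le_of_le_one_right (by positivity) (hbox u hu.1)
  have hT' : (#T' : ℝ) ≤ 4 * N * P * (4 / N + 1) := by
    rw [card_eq_sum_card_image (cross · v) T', Nat.cast_sum]
    refine (sum_le_card_nsmul _ _ (4 / N + 1) fun e _ => ?_).trans ?_
    · exact (Nat.cast_le.2 (card_le_card (filter_subset_filter _ (filter_subset _ T)))).trans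
        (card_filter_cross_eq_le hX₁ hX₂ hbox (hprim v hv) e)
    · rw [nsmul_eq_mul]; gcongr
  have hN1 : N ≤ 1 := hbox v hv
  rw [← card_filter_add_card_filter_not (fun u => cross u v = 0), Nat.cast_add]
  calc (_ : ℝ) + #T' ≤ 2 + 4 * N * P * (4 / N + 1) := add_le_add (by exact_mod_cast hT₀) hT'
    _ = 2 + 16 * P + 4 * N * P := by field_simp; ring
    _ ≤ 2 + 20 * P := by nlinarith

/-- Heath-Brown's lemma: for `(m₁, m₂, q)` with `gcd(m₁, m₂, q) = 1` and `q ≠ 0`, the number of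
primitive pairs `(x₁, x₂)` with `|x₁| ≤ X₁`, `|x₂| ≤ X₂` and `x₁m₁ + x₂m₂ ≡ 0 (mod q)` is
`O(X₁X₂/|q| + 1)` with an absolute implied constant. -/
theorem primitive_pairs_congruence_bound :
    ∃ C : ℝ, 0 < C ∧ ∀ m₁ m₂ q : ℤ, q ≠ 0 → Int.gcd m₁ (Int.gcd m₂ q) = 1 →
      ∀ X₁ X₂ : ℝ, 0 < X₁ → 0 < X₂ →
      (Nat.card {p : ℤ × ℤ | Int.gcd p.1 p.2 = 1 ∧ |(p.1 : ℝ)| ≤ X₁ ∧ |(p.2 : ℝ)| ≤ X₂ ∧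
          q ∣ (p.1 * m₁ + p.2 * m₂)} : ℝ)
        ≤ C * (X₁ * X₂ / |(q : ℝ)| + 1) := by
  refine ⟨20, by norm_num, fun m₁ m₂ q hq hg X₁ X₂ hX₁ hX₂ => ?_⟩
  set S := {p : ℤ × ℤ | Int.gcd p.1 p.2 = 1 ∧ |(p.1 : ℝ)| ≤ X₁ ∧ |(p.2 : ℝ)| ≤ X₂ ∧
    q ∣ (p.1 * m₁ + p.2 * m₂)}
  have hfin : S.Finite := (Set.finite_Icc (-⌊X₁⌋, -⌊X₂⌋) (⌊X₁⌋, ⌊X₂⌋)).subset fun u hu => by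
    have h₁ := (abs_intCast_le_iff_floor _ _).1 hu.2.1
    have h₂ := (abs_intCast_le_iff_floor _ _).1 hu.2.2.1
    exact ⟨⟨h₁.1, h₂.1⟩, ⟨h₁.2, h₂.2⟩⟩
  rw [Nat.card_eq_card_finite_toFinset hfin]
  rcases hfin.toFinset.eq_empty_or_nonempty with hempty | ⟨v, hv⟩
  · rw [hempty, card_empty, Nat.cast_zero]; positivity
  have hS : ∀ u ∈ hfin.toFinset, u ∈ S := fun u hu => hfin.mem_toFinset.1 hu
  have := card_le_of_forall_dvd_cross hq hX₁ hX₂ (fun u hu => (hS u hu).1)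
    (fun u hu => (boxNorm_le_iff hX₁ hX₂).2
      ⟨by simpa using (hS u hu).2.1, by simpa using (hS u hu).2.2.1⟩)
    hv (fun u hu => dvd_cross_of_dvd hg (hS u hu).2.2.2 (hS v hv).2.2.2)
  linarith
end

section
/- Let q₂, q₃, q₄ be the (distinct) roots of x³ + Ax + B and {k, i, j} = {2, 3, 4}. Then the Möbius transformation of ℙ¹ given by the matrix γ = ((q_k, 2q_k² + A), (1, -q_k)) swaps (1:0) with (q_k:1) and swaps (q_i:1) with (q_j:1); in particular it permutes the four points {(1:0), (q₂:1), (q₃:1), (q₄:1)} as the double transposition (1 k)(i j). -/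
open scoped LinearAlgebra.Projectivization

/-- The point `(a : 1)` of `ℙ¹`. -/
noncomputable def ptA {F : Type*} [Field F] (a : F) : ℙ F (Fin 2 → F) :=
  Projectivization.mk F ![a, 1] (by intro h; simpa using congrFun h 1)

/-- The point `(1 : 0)` of `ℙ¹`. -/
noncomputable def ptInf (F : Type*) [Field F] : ℙ F (Fin 2 → F) :=
  Projectivization.mk F ![1, 0] (by intro h; simpa using congrFun h 0)

/-!
For the roots `q_k, q_i, q_j` of `x³ + Ax + B` one has `3q_k² + A = (q_k - q_i)(q_k - q_j)`
(the derivative of the cubic at `q_k`), so `γ` has determinant `-(q_k - q_i)(q_k - q_j) ≠ 0`.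
Applied to `(a, 1)`, `γ` gives `(q_k a + 2q_k² + A, a - q_k)`; this is `(q_k, 1)` at infinity,
`(3q_k² + A)(1, 0)` at `a = q_k`, and `(q_i - q_k)(q_j, 1)` at `a = q_i`, by Vieta.
-/

theorem Projectivization.map_mk_eq_mk_of_eq_smul {K V W : Type*} [DivisionRing K]
    [AddCommGroup V] [Module K V] [AddCommGroup W] [Module K W] (f : V →ₗ[K] W)
    (hf : Function.Injective f) {v : V} {w : W} (hv : v ≠ 0) (hw : w ≠ 0) (c : K)
    (h : f v = c • w) :
    Projectivization.map f hf (Projectivization.mk K v hv) = Projectivization.mk K w hw := by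
  rw [Projectivization.map_mk, Projectivization.mk_eq_mk_iff']
  exact ⟨c, h.symm⟩

theorem Matrix.toLin'_injective_of_det_ne_zero {K n : Type*} [Field K] [Fintype n]
    [DecidableEq n] {M : Matrix n n K} (h : M.det ≠ 0) : Function.Injective (Matrix.toLin' M) :=
  Matrix.mulVec_injective_iff_isUnit.2 ((Matrix.isUnit_iff_isUnit_det M).2 h.isUnit)

section Involution

open Matrix

variable {F : Type*} [Field F] (A qk : F)

theorem involution_det : (!![qk, 2 * qk ^ 2 + A; (1 : F), -qk]).det = -(3 * qk ^ 2 + A) := by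
  rw [Matrix.det_fin_two_of]
  ring

theorem involution_mulVec (a : F) :
    !![qk, 2 * qk ^ 2 + A; (1 : F), -qk] *ᵥ ![a, 1] = ![qk * a + (2 * qk ^ 2 + A), a - qk] := by
  rw [mulVec_fin_two]
  exact vec2_eq (by simp) (by simp [sub_eq_add_neg])

theorem involution_mulVec_infty : !![qk, 2 * qk ^ 2 + A; (1 : F), -qk] *ᵥ ![1, 0] = ![qk, 1] := by
  rw [mulVec_fin_two]
  simp

theorem involution_mulVec_self :
    !![qk, 2 * qk ^ 2 + A; (1 : F), -qk] *ᵥ ![qk, 1] = (3 * qk ^ 2 + A) • ![1, 0] := by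
  rw [involution_mulVec, smul_vec2]
  exact vec2_eq (by ring) (by simp)

variable {A qk} {qi qj : F} (hsum : qk + qi + qj = 0) (he2 : qk * qi + qk * qj + qi * qj = A)
include hsum he2

theorem three_sq_add_eq_mul_sub_mul_sub : 3 * qk ^ 2 + A = (qk - qi) * (qk - qj) := by
  linear_combination 2 * qk * hsum - he2

theorem involution_mulVec_root :
    !![qk, 2 * qk ^ 2 + A; (1 : F), -qk] *ᵥ ![qi, 1] = (qi - qk) • ![qj, 1] := by
  rw [involution_mulVec, smul_vec2]
  exact vec2_eq (by linear_combination 2 * qk * hsum - he2) (by simp)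

end Involution

theorem mobius_double_transposition_general {F : Type*} [Field F] (A qk qi qj : F)
    (hsum : qk + qi + qj = 0) (he2 : qk * qi + qk * qj + qi * qj = A)
    (hki : qk ≠ qi) (hkj : qk ≠ qj) :
    ∃ hf : Function.Injective (Matrix.toLin' !![qk, 2 * qk ^ 2 + A; (1 : F), -qk]),
      Projectivization.map (Matrix.toLin' !![qk, 2 * qk ^ 2 + A; (1 : F), -qk]) hf
          (ptInf F) = ptA qk ∧
      Projectivization.map (Matrix.toLin' !![qk, 2 * qk ^ 2 + A; (1 : F), -qk]) hf
          (ptA qk) = ptInf F ∧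
      Projectivization.map (Matrix.toLin' !![qk, 2 * qk ^ 2 + A; (1 : F), -qk]) hf
          (ptA qi) = ptA qj ∧
      Projectivization.map (Matrix.toLin' !![qk, 2 * qk ^ 2 + A; (1 : F), -qk]) hf
          (ptA qj) = ptA qi := by
  have hdet : (!![qk, 2 * qk ^ 2 + A; (1 : F), -qk]).det ≠ 0 := by
    rw [involution_det, three_sq_add_eq_mul_sub_mul_sub hsum he2, neg_ne_zero]
    exact mul_ne_zero (sub_ne_zero.2 hki) (sub_ne_zero.2 hkj)
  refine ⟨Matrix.toLin'_injective_of_det_ne_zero hdet, ?_, ?_, ?_, ?_⟩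
  · exact Projectivization.map_mk_eq_mk_of_eq_smul _ _ _ _ 1 <| by
      rw [Matrix.toLin'_apply, involution_mulVec_infty, one_smul]
  · exact Projectivization.map_mk_eq_mk_of_eq_smul _ _ _ _ _ (involution_mulVec_self A qk)
  · exact Projectivization.map_mk_eq_mk_of_eq_smul _ _ _ _ _ (involution_mulVec_root hsum he2)
  · exact Projectivization.map_mk_eq_mk_of_eq_smul _ _ _ _ _
      (involution_mulVec_root (by linear_combination hsum) (by linear_combination he2))

/-- For distinct roots `q_k, q_i, q_j` of `x³ + Ax + B`, the Möbius transformation of `ℙ¹`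
induced by the matrix `((q_k, 2q_k² + A), (1, -q_k))` swaps `(1:0)` with `(q_k:1)` and swaps
`(q_i:1)` with `(q_j:1)`; i.e. it acts on the four marked points as the double transposition
`(1 k)(i j)`. -/
theorem mobius_double_transposition {F : Type*} [Field F] (A B qk qi qj : F)
    (hsum : qk + qi + qj = 0) (he2 : qk * qi + qk * qj + qi * qj = A)
    (he3 : qk * qi * qj = -B)
    (hki : qk ≠ qi) (hkj : qk ≠ qj) (hij : qi ≠ qj) :
    ∃ hf : Function.Injective (Matrix.toLin' !![qk, 2 * qk ^ 2 + A; (1 : F), -qk]),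
      Projectivization.map (Matrix.toLin' !![qk, 2 * qk ^ 2 + A; (1 : F), -qk]) hf
          (ptInf F) = ptA qk ∧
      Projectivization.map (Matrix.toLin' !![qk, 2 * qk ^ 2 + A; (1 : F), -qk]) hf
          (ptA qk) = ptInf F ∧
      Projectivization.map (Matrix.toLin' !![qk, 2 * qk ^ 2 + A; (1 : F), -qk]) hf
          (ptA qi) = ptA qj ∧
      Projectivization.map (Matrix.toLin' !![qk, 2 * qk ^ 2 + A; (1 : F), -qk]) hf
          (ptA qj) = ptA qi :=
  mobius_double_transposition_general A qk qi qj hsum he2 hki hkj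
end

section
/- Let V ⊂ ℙ³ be the smooth quartic surface defined by c₁·t₁·F̃(x₁,t₁) = c₂·t₂·F̃(x₂,t₂), where F̃(x,t) = x³+Axt²+Bt³ has distinct roots and c₁, c₂ are nonzero constants. Then every line contained in V is either (1) one of the 16 lines given by (x₁:t₁) ∈ Z and (x₂:t₂) ∈ Z, where Z ⊂ ℙ¹ is the common zero set of t·F̃(x,t) (four points), or (2) one of the 4 lines of the form (x₂:t₂) = ψ(x₁:t₁) for ψ a Möbius transformation of ℙ¹ with ψ(Z) = Z satisfying the compatibility with c₁, c₂. -/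
/-!
Write `proj₁ u = (x₁, t₁)` and `proj₂ u = (x₂, t₂)`. On a plane `L` contained in the surface,
`c₁ Φ(proj₁ u) = c₂ Φ(proj₂ u)`, and the two projections have no common kernel. If `proj₂` is an
isomorphism on `L` while `proj₁` kills some `u₀ ≠ 0`, then `Φ` is invariant under translation by
`proj₂ u₀ ≠ 0`, which is impossible because a cubic `x³ + px + q` is never constant. So either both
projections are isomorphisms on `L`, and `L` is the graph of `ψ = proj₂ ∘ proj₁⁻¹`, or both have
nonzero kernels, and `L` is spanned by a vector of `ker proj₂` and one of `ker proj₁`; the equation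
of the surface at these two vectors says that their images are zeros of `Φ`.
-/

/-- `Φ(v) = t·F̃(x,t)` for `v = (x, t)`, where `F̃(x,t) = x³ + Axt² + Bt³`. -/
def Phi {F : Type*} [Field F] (A B : F) (v : Fin 2 → F) : F :=
  v 1 * ((v 0) ^ 3 + A * (v 0) * (v 1) ^ 2 + B * (v 1) ^ 3)

open Module LinearMap Submodule Matrix

section Projections

variable {R : Type*} [Semiring R]

def proj₁ : (Fin 4 → R) →ₗ[R] Fin 2 → R := LinearMap.pi ![LinearMap.proj 0, LinearMap.proj 2]

def proj₂ : (Fin 4 → R) →ₗ[R] Fin 2 → R := LinearMap.pi ![LinearMap.proj 1, LinearMap.proj 3]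

@[simp]
lemma proj₁_apply (u : Fin 4 → R) : proj₁ u = ![u 0, u 2] := by
  ext i; fin_cases i <;> rfl

@[simp]
lemma proj₂_apply (u : Fin 4 → R) : proj₂ u = ![u 1, u 3] := by
  ext i; fin_cases i <;> rfl

lemma eq_zero_of_proj₁_eq_zero_of_proj₂_eq_zero {u : Fin 4 → R} (h₁ : proj₁ u = 0)
    (h₂ : proj₂ u = 0) : u = 0 := by
  have h₁ := congr_fun h₁
  have h₂ := congr_fun h₂
  ext i; fin_cases i
  exacts [h₁ 0, h₂ 0, h₁ 1, h₂ 1]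

lemma eq_vec_proj (u : Fin 4 → R) : u = ![proj₁ u 0, proj₂ u 0, proj₁ u 1, proj₂ u 1] := by
  ext i; fin_cases i <;> rfl

@[simp]
lemma proj₁_vec (v w : Fin 2 → R) : proj₁ ![v 0, w 0, v 1, w 1] = v := by
  ext i; fin_cases i <;> rfl

@[simp]
lemma proj₂_vec (v w : Fin 2 → R) : proj₂ ![v 0, w 0, v 1, w 1] = w := by
  ext i; fin_cases i <;> rfl

end Projections

section Phi

variable {F : Type*} [Field F] (A B : F)

@[simp]
lemma Phi_zero : Phi A B 0 = 0 := by
  simp [Phi]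

lemma exists_cubic_ne_zero [CharZero F] (p q : F) : ∃ x : F, x ^ 3 + p * x + q ≠ 0 := by
  by_contra! h
  have h6 : (6 : F) = 0 := by linear_combination h 2 - 2 * h 1 + h 0
  exact absurd h6 (by norm_num)

lemma eq_zero_of_Phi_add_smul_eq [CharZero F] {b : Fin 2 → F}
    (h : ∀ v (s : F), Phi A B (v + s • b) = Phi A B v) : b = 0 := by
  by_cases hb₁ : b 1 = 0
  · by_contra hb
    have hb₀ : b 0 ≠ 0 := fun hb₀ => hb (by ext i; fin_cases i <;> simp [hb₀, hb₁])
    obtain ⟨x, hx⟩ := exists_cubic_ne_zero A 0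
    have := h ![0, 1] (x / b 0)
    simp only [Phi, Pi.add_apply, Pi.smul_apply, smul_eq_mul, cons_val_zero, cons_val_one,
      cons_val_fin_one, hb₁, div_mul_cancel₀ x hb₀] at this
    exact hx (by linear_combination this)
  · obtain ⟨x, hx⟩ := exists_cubic_ne_zero (A * b 1 ^ 2) (B * b 1 ^ 3)
    have := h ![x - b 0, 0] 1
    simp only [Phi, Pi.add_apply, one_smul, cons_val_zero, cons_val_one, cons_val_fin_one,
      sub_add_cancel, zero_add] at this
    exact absurd (mul_left_cancel₀ hb₁ (by linear_combination this)) hx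

end Phi

lemma ker_le_ker_of_Phi_compat {F V : Type*} [Field F] [CharZero F] [AddCommGroup V] [Module F V]
    {A B c d : F} {P Q : V →ₗ[F] Fin 2 → F} (hd : d ≠ 0) (hQ : Function.Surjective Q)
    (h : ∀ x, c * Phi A B (P x) = d * Phi A B (Q x)) : ker P ≤ ker Q := by
  intro x₀ hx₀
  rw [mem_ker] at hx₀ ⊢
  refine eq_zero_of_Phi_add_smul_eq A B fun v s => ?_
  obtain ⟨x, rfl⟩ := hQ v
  have := h (x + s • x₀)
  rw [map_add, map_smul, map_add, map_smul, hx₀, smul_zero, add_zero, h x] at this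
  exact (mul_left_cancel₀ hd this).symm

section Planes

variable {F : Type*} [Field F] {L : Submodule F (Fin 4 → F)}

lemma exists_matrix_of_bijective_proj (h₁ : Function.Bijective (proj₁.domRestrict L))
    (h₂ : Function.Bijective (proj₂.domRestrict L)) :
    ∃ M : Matrix (Fin 2) (Fin 2) F, IsUnit M.det ∧
      (L : Set (Fin 4 → F))
        = {u | ∃ v : Fin 2 → F, u = ![v 0, M.mulVec v 0, v 1, M.mulVec v 1]} := by
  let ψ := (LinearEquiv.ofBijective _ h₁).symm.trans (LinearEquiv.ofBijective _ h₂)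
  refine ⟨toMatrix' (ψ : (Fin 2 → F) →ₗ[F] Fin 2 → F), by
    rw [det_toMatrix']; exact ψ.isUnit_det', ?_⟩
  have hψ : ∀ x : L, toMatrix' (ψ : (Fin 2 → F) →ₗ[F] Fin 2 → F) *ᵥ proj₁ x = proj₂ x := by
    intro x
    change toMatrix' _ *ᵥ LinearEquiv.ofBijective _ h₁ x = _
    rw [toMatrix'_mulVec, LinearEquiv.coe_coe, LinearEquiv.trans_apply,
      LinearEquiv.symm_apply_apply]
    rfl
  ext u
  constructor
  · intro hu
    exact ⟨proj₁ u, by rw [hψ ⟨u, hu⟩]; exact eq_vec_proj u⟩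
  · rintro ⟨v, rfl⟩
    obtain ⟨x, rfl⟩ := h₁.surjective v
    rw [domRestrict_apply, hψ x, ← eq_vec_proj]
    exact x.2

lemma coe_eq_of_mem_ker_proj (hL : finrank F L = 2) {u₁ u₂ : Fin 4 → F} (hu₁ : u₁ ∈ L)
    (hu₂ : u₂ ∈ L) (h₁ : proj₁ u₁ = 0) (h₂ : proj₂ u₂ = 0) (ha : proj₁ u₂ ≠ 0)
    (hb : proj₂ u₁ ≠ 0) :
    (L : Set (Fin 4 → F)) = {u | ∃ s t : F,
      u = ![s * proj₁ u₂ 0, t * proj₂ u₁ 0, s * proj₁ u₂ 1, t * proj₂ u₁ 1]} := by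
  have hind : LinearIndependent F ![u₂, u₁] := by
    rw [LinearIndependent.pair_iff]
    intro s t hst
    have e₁ := congr_arg proj₁ hst
    have e₂ := congr_arg proj₂ hst
    rw [map_add, map_smul, map_smul, h₁, smul_zero, add_zero, map_zero, smul_eq_zero] at e₁
    rw [map_add, map_smul, map_smul, h₂, smul_zero, zero_add, map_zero, smul_eq_zero] at e₂
    exact ⟨e₁.resolve_right ha, e₂.resolve_right hb⟩
  have hspan : span F {u₂, u₁} = L := by
    refine Submodule.eq_of_le_of_finrank_eq ?_ ?_
    · rw [span_le]; simp [Set.insert_subset_iff, hu₁, hu₂]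
    · rw [hL, ← Matrix.range_cons_cons_empty, finrank_span_eq_card hind, Fintype.card_fin]
  obtain ⟨h₁₀, h₁₂⟩ : u₁ 0 = 0 ∧ u₁ 2 = 0 := by simpa using h₁
  obtain ⟨h₂₁, h₂₃⟩ : u₂ 1 = 0 ∧ u₂ 3 = 0 := by simpa using h₂
  ext u
  rw [← hspan, SetLike.mem_coe, mem_span_pair]
  refine exists₂_congr fun s t => ?_
  rw [eq_comm]
  refine Eq.congr_right ?_
  ext i; fin_cases i <;> simp [h₁₀, h₁₂, h₂₁, h₂₃]

end Planes

theorem lines_on_quartic_surface_general {F : Type*} [Field F] [CharZero F]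
    (A B c₁ c₂ : F) (hc₁ : c₁ ≠ 0) (hc₂ : c₂ ≠ 0)
    (L : Submodule F (Fin 4 → F)) (hrank : Module.finrank F L = 2)
    (hLV : ∀ u ∈ L, c₁ * Phi A B ![u 0, u 2] = c₂ * Phi A B ![u 1, u 3]) :
    (∃ a b : Fin 2 → F, a ≠ 0 ∧ b ≠ 0 ∧ Phi A B a = 0 ∧ Phi A B b = 0 ∧
      (L : Set (Fin 4 → F)) = {u | ∃ s t : F, u = ![s * a 0, t * b 0, s * a 1, t * b 1]}) ∨
    (∃ M : Matrix (Fin 2) (Fin 2) F, IsUnit M.det ∧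
      (∀ v : Fin 2 → F, Phi A B v = 0 → Phi A B (M.mulVec v) = 0) ∧
      (∀ v : Fin 2 → F, c₁ * Phi A B v = c₂ * Phi A B (M.mulVec v)) ∧
      (L : Set (Fin 4 → F))
        = {u | ∃ v : Fin 2 → F, u = ![v 0, M.mulVec v 0, v 1, M.mulVec v 1]}) := by
  have hP (x : L) :
      c₁ * Phi A B (proj₁ (x : Fin 4 → F)) = c₂ * Phi A B (proj₂ (x : Fin 4 → F)) := by
    simpa using hLV x x.2
  have hdim : finrank F L = finrank F (Fin 2 → F) := by simp [hrank]
  have bijective_of_ker {P : L →ₗ[F] Fin 2 → F} (h : ker P = ⊥) : Function.Bijective P :=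
    ⟨ker_eq_bot.1 h, (injective_iff_surjective_of_finrank_eq_finrank hdim).1 (ker_eq_bot.1 h)⟩
  by_cases h₁ : ker (proj₁.domRestrict L) = ⊥
  · have h₂ : ker (proj₂.domRestrict L) = ⊥ := eq_bot_iff.2 <|
      (ker_le_ker_of_Phi_compat hc₁ (bijective_of_ker h₁).2 fun x => (hP x).symm).trans h₁.le
    obtain ⟨M, hdet, hL⟩ :=
      exists_matrix_of_bijective_proj (bijective_of_ker h₁) (bijective_of_ker h₂)
    have hM : ∀ v, c₁ * Phi A B v = c₂ * Phi A B (M.mulVec v) := fun v => by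
      have hv : ![v 0, M.mulVec v 0, v 1, M.mulVec v 1] ∈ (L : Set (Fin 4 → F)) := hL ▸ ⟨v, rfl⟩
      simpa only [proj₁_vec, proj₂_vec] using hP ⟨_, hv⟩
    refine Or.inr ⟨M, hdet, fun v hv => ?_, hM, hL⟩
    simpa [hv, hc₂] using (hM v).symm
  · have h₂ : ker (proj₂.domRestrict L) ≠ ⊥ := fun h₂ => h₁ <| eq_bot_iff.2 <|
      (ker_le_ker_of_Phi_compat hc₂ (bijective_of_ker h₂).2 hP).trans h₂.le
    obtain ⟨x₁, hx₁, hx₁0⟩ := (Submodule.ne_bot_iff _).1 h₁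
    obtain ⟨x₂, hx₂, hx₂0⟩ := (Submodule.ne_bot_iff _).1 h₂
    rw [mem_ker, domRestrict_apply] at hx₁ hx₂
    have ha : proj₁ (x₂ : Fin 4 → F) ≠ 0 := fun ha =>
      hx₂0 (Subtype.ext (eq_zero_of_proj₁_eq_zero_of_proj₂_eq_zero ha hx₂))
    have hb : proj₂ (x₁ : Fin 4 → F) ≠ 0 := fun hb =>
      hx₁0 (Subtype.ext (eq_zero_of_proj₁_eq_zero_of_proj₂_eq_zero hx₁ hb))
    refine Or.inl ⟨_, _, ha, hb, ?_, ?_, coe_eq_of_mem_ker_proj hrank x₁.2 x₂.2 hx₁ hx₂ ha hb⟩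
    · exact (mul_eq_zero.1 <| (hP x₂).trans (by rw [hx₂, Phi_zero, mul_zero])).resolve_left hc₁
    · exact (mul_eq_zero.1 <| (hP x₁).symm.trans (by rw [hx₁, Phi_zero, mul_zero])).resolve_left
        hc₂

/-- Classification of lines on the smooth quartic surface
`c₁·t₁·F̃(x₁,t₁) = c₂·t₂·F̃(x₂,t₂)` in `ℙ³` (Boissière–Sarti): every line (2-dimensional
subspace of `F⁴`, coordinates `(x₁, x₂, t₁, t₂)`) contained in the surface is either one of the
lines joining a zero `(x₁:t₁)` of `t F̃` to a zero `(x₂:t₂)` of `t F̃`, or a line of the form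
`(x₂:t₂) = ψ(x₁:t₁)` for a Möbius transformation `ψ` of `ℙ¹` preserving the zero set,
compatible with `c₁, c₂` in the sense that `c₁Φ = c₂(Φ ∘ ψ)`. -/
theorem lines_on_quartic_surface {F : Type*} [Field F] [IsAlgClosed F] [CharZero F]
    (A B c₁ c₂ : F) (hΔ : 4 * A ^ 3 + 27 * B ^ 2 ≠ 0) (hc₁ : c₁ ≠ 0) (hc₂ : c₂ ≠ 0)
    (L : Submodule F (Fin 4 → F)) (hrank : Module.finrank F L = 2)
    (hLV : ∀ u ∈ L, c₁ * Phi A B ![u 0, u 2] = c₂ * Phi A B ![u 1, u 3]) :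
    (∃ a b : Fin 2 → F, a ≠ 0 ∧ b ≠ 0 ∧ Phi A B a = 0 ∧ Phi A B b = 0 ∧
      (L : Set (Fin 4 → F)) = {u | ∃ s t : F, u = ![s * a 0, t * b 0, s * a 1, t * b 1]}) ∨
    (∃ M : Matrix (Fin 2) (Fin 2) F, IsUnit M.det ∧
      (∀ v : Fin 2 → F, Phi A B v = 0 → Phi A B (M.mulVec v) = 0) ∧
      (∀ v : Fin 2 → F, c₁ * Phi A B v = c₂ * Phi A B (M.mulVec v)) ∧
      (L : Set (Fin 4 → F))
        = {u | ∃ v : Fin 2 → F, u = ![v 0, M.mulVec v 0, v 1, M.mulVec v 1]}) :=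
  lines_on_quartic_surface_general A B c₁ c₂ hc₁ hc₂ L hrank hLV
end

section
/- Let q₂, q₃, q₄ be the roots of x³ + Ax + B with A = 0 and B ≠ 0. For {i,j,k} = {2,3,4}, one has q_k² = q_i·q_j, and the matrix ((q_i, 2q_iq_j), (1, -q_j)) induces a Möbius transformation of ℙ¹ sending (1:0) to (q_i:1) and (q_j:1) to (1:0), which preserves the set {(1:0),(q₂:1),(q₃:1),(q₄:1)} and acts on it as the permutation (1 i j) in cycle notation (indexing (1:0) as 1). -/
open scoped LinearAlgebra.Projectivization

/-- For `A = 0`, `B ≠ 0`, with roots `q_i, q_j, q_k` of `x³ + B`, one has `q_k² = q_i q_j`,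
and the matrix `((q_i, 2q_iq_j), (1, -q_j))` induces the 3-cycle `(1 i j)` on the four marked
points: `(1:0) ↦ (q_i:1)`, `(q_i:1) ↦ (q_j:1)`, `(q_j:1) ↦ (1:0)`, fixing `(q_k:1)`. -/
theorem mobius_three_cycle {F : Type*} [Field F] (B qi qj qk : F)
    (hB : B ≠ 0)
    (hsum : qi + qj + qk = 0) (he2 : qi * qj + qi * qk + qj * qk = 0)
    (he3 : qi * qj * qk = -B)
    (hij : qi ≠ qj) (hik : qi ≠ qk) (hjk : qj ≠ qk) :
    qk ^ 2 = qi * qj ∧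
    ∃ hf : Function.Injective (Matrix.toLin' !![qi, 2 * qi * qj; (1 : F), -qj]),
      Projectivization.map (Matrix.toLin' !![qi, 2 * qi * qj; (1 : F), -qj]) hf
          (ptInf F) = ptA qi ∧
      Projectivization.map (Matrix.toLin' !![qi, 2 * qi * qj; (1 : F), -qj]) hf
          (ptA qi) = ptA qj ∧
      Projectivization.map (Matrix.toLin' !![qi, 2 * qi * qj; (1 : F), -qj]) hf
          (ptA qj) = ptInf F ∧
      Projectivization.map (Matrix.toLin' !![qi, 2 * qi * qj; (1 : F), -qj]) hf
          (ptA qk) = ptA qk := by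
  have hk2 : qk ^ 2 = qi * qj := by linear_combination -he2 + qk * hsum
  have hqi : qi ≠ 0 := by rintro rfl; exact hB (by linear_combination he3)
  have hqj : qj ≠ 0 := by rintro rfl; exact hB (by linear_combination he3)
  have hci : qi ^ 3 = -B := by linear_combination qi ^ 2 * hsum - qi * he2 + he3
  have hcj : qj ^ 3 = -B := by linear_combination qj ^ 2 * hsum - qj * he2 + he3
  have h3 : (3 : F) ≠ 0 := by
    intro h3
    have hcube : (qi - qj) ^ 3 = 0 := by
      linear_combination hci - hcj + (qi * qj ^ 2 - qi ^ 2 * qj) * h3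
    exact hij (sub_eq_zero.mp (pow_eq_zero_iff (by norm_num) |>.mp hcube))
  have hcube2 : qi ^ 2 + qi * qj + qj ^ 2 = 0 := by
    have h1 : (qi - qj) * (qi ^ 2 + qi * qj + qj ^ 2) = 0 := by
      linear_combination hci - hcj
    rcases mul_eq_zero.mp h1 with h | h
    · exact absurd (sub_eq_zero.mp h) hij
    · exact h
  have hf : Function.Injective (Matrix.toLin' !![qi, 2 * qi * qj; (1 : F), -qj]) := by
    have hdet : IsUnit (!![qi, 2 * qi * qj; (1 : F), -qj]).det := by
      rw [Matrix.det_fin_two_of]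
      refine isUnit_iff_ne_zero.mpr fun h => ?_
      have h30 : (3 : F) * (qi * qj) = 0 := by linear_combination -h
      rcases mul_eq_zero.mp h30 with h' | h'
      · exact h3 h'
      · exact mul_ne_zero hqi hqj h'
    have hdetU : IsUnit !![qi, 2 * qi * qj; (1 : F), -qj] :=
      (Matrix.isUnit_iff_isUnit_det _).mpr hdet
    have hinj := Matrix.mulVec_injective_iff_isUnit.mpr hdetU
    intro x y hxy
    exact hinj (by simpa [Matrix.toLin'_apply] using hxy)
  have hM : ∀ x y : F, Matrix.toLin' !![qi, 2 * qi * qj; (1 : F), -qj] ![x, y] =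
      ![qi * x + 2 * qi * qj * y, x - qj * y] := by
    intro x y
    funext i
    fin_cases i <;>
      simp [Matrix.toLin'_apply, Matrix.mulVec, dotProduct, Fin.sum_univ_two] <;> ring
  refine ⟨hk2, hf, ?_, ?_, ?_, ?_⟩
  · rw [ptInf, ptA, Projectivization.map_mk, Projectivization.mk_eq_mk_iff']
    refine ⟨1, ?_⟩
    rw [hM]
    funext i
    fin_cases i <;> simp
  · rw [ptA, ptA, Projectivization.map_mk, Projectivization.mk_eq_mk_iff']
    refine ⟨qi - qj, ?_⟩
    rw [hM]
    funext i
    fin_cases i <;> simp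
    linear_combination -hcube2
  · rw [ptA, ptInf, Projectivization.map_mk, Projectivization.mk_eq_mk_iff']
    refine ⟨3 * qi * qj, ?_⟩
    rw [hM]
    funext i
    fin_cases i <;> simp <;> ring
  · rw [ptA, Projectivization.map_mk, Projectivization.mk_eq_mk_iff']
    refine ⟨qk - qj, ?_⟩
    rw [hM]
    funext i
    fin_cases i <;> simp
    linear_combination hk2 - he2
end
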